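/- arXiv:1809.03797 — 2 statements merged into one kernel-verified Lean document; each statement's English description precedes it below -/
import Mathlib

section
/- Let f : [0,1] → ℝ be a convex function (not assumed continuous). Then the graphon parameter INT_f defined by INT_f(W) = ∫_{[0,1]²} f(W(x,y)) dx dy is cut distance compatible: whenever U and W are graphons with U ⪯ W, one has INT_f(U) ≤ INT_f(W). -/
open MeasureTheory

attribute [local instance] Classical.propDecidable

noncomputable section

/-- The unit interval `[0,1]`, equipped with the (restricted) Lebesgue measure. -/
abbrev UI : Type := Set.Icc (0:ℝ) 1

/-- A graphon: a symmetric measurable function `[0,1]² → [0,1]`. -/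
def IsGraphon (W : UI → UI → ℝ) : Prop :=
  Measurable (Function.uncurry W) ∧ (∀ x y, W x y = W y x) ∧
    ∀ x y, W x y ∈ Set.Icc (0:ℝ) 1

/-- A kernel: a bounded symmetric measurable function `[0,1]² → ℝ`. -/
def IsKernel (W : UI → UI → ℝ) : Prop :=
  Measurable (Function.uncurry W) ∧ (∀ x y, W x y = W y x) ∧
    ∃ C : ℝ, ∀ x y, |W x y| ≤ C

/-- The cut norm `‖W‖_□`. -/
def cutNorm (W : UI → UI → ℝ) : ℝ :=
  sSup { r : ℝ | ∃ S T : Set UI, MeasurableSet S ∧ MeasurableSet T ∧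
    r = |∫ x in S, ∫ y in T, W x y| }

/-- A measure preserving bijection of `[0,1]`. -/
structure MPB where
  toFun : UI → UI
  bijective : Function.Bijective toFun
  measurePreserving : MeasurePreserving toFun

/-- The version `W^φ` of `W`. -/
def vers (W : UI → UI → ℝ) (φ : UI → UI) : UI → UI → ℝ := fun x y => W (φ x) (φ y)

/-- The cut distance `δ_□(U,W)`. -/
def cutDist (U W : UI → UI → ℝ) : ℝ :=
  ⨅ φ : MPB, cutNorm (fun x y => U x y - vers W φ.toFun x y)

/-- Weak* convergence of a sequence of (bounded measurable) functions on `[0,1]²`: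
convergence of integrals over all products of measurable sets. -/
def WeakStarTendsto (Wn : ℕ → UI → UI → ℝ) (W : UI → UI → ℝ) : Prop :=
  ∀ S T : Set UI, MeasurableSet S → MeasurableSet T →
    Filter.Tendsto (fun n => ∫ x in S, ∫ y in T, Wn n x y) Filter.atTop
      (nhds (∫ x in S, ∫ y in T, W x y))

/-- The envelope `⟨W⟩`: the set of graphons arising as weak* limits of versions of `W`. -/
def envelope (W : UI → UI → ℝ) : Set (UI → UI → ℝ) :=
  { U | IsGraphon U ∧ ∃ π : ℕ → MPB, WeakStarTendsto (fun n => vers W (π n).toFun) U }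

/-- The `L¹` distance on `[0,1]²`. -/
def L1dist (U V : UI → UI → ℝ) : ℝ :=
  ∫ x : UI, ∫ y : UI, |U x y - V x y|

/-- The homomorphism density of the `m`-cycle `C_m` in `W`. -/
def cycleDensity (m : ℕ) (W : UI → UI → ℝ) : ℝ :=
  ∫ x : Fin m → UI, ∏ i, W (x i) (x (finRotate m i))

/-- The homomorphism density `t(H,W)` of a finite simple graph `H` on `{0,…,n-1}` in `W`. -/
def homDensity {n : ℕ} (G : SimpleGraph (Fin n)) [DecidableRel G.Adj]
    (W : UI → UI → ℝ) : ℝ :=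
  ∫ x : Fin n → UI, ∏ p : Fin n × Fin n,
    if p.1 < p.2 ∧ G.Adj p.1 p.2 then W (x p.1) (x p.2) else 1

/-- The decorated homomorphism density `t(H,w)` where each edge `{i,j}` of `H` carries the
function `w i j`. -/
def homDensityDecorated {n : ℕ} (G : SimpleGraph (Fin n)) [DecidableRel G.Adj]
    (w : Fin n → Fin n → UI → UI → ℝ) : ℝ :=
  ∫ x : Fin n → UI, ∏ p : Fin n × Fin n,
    if p.1 < p.2 ∧ G.Adj p.1 p.2 then w p.1 p.2 (x p.1) (x p.2) else 1

/-- The number of edges `e(H)`. -/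
def edgeCount {n : ℕ} (G : SimpleGraph (Fin n)) [DecidableRel G.Adj] : ℕ :=
  G.edgeFinset.card

/-- The average of `W` over `A × B` (zero if `A` or `B` is a null set). -/
def stepAvg (W : UI → UI → ℝ) (A B : Set UI) : ℝ :=
  (∫ x in A, ∫ y in B, W x y) / ((volume A).toReal * (volume B).toReal)

/-- The stepping `W^{⋈P}` of `W` with respect to the finite partition of `[0,1]` given by the
fibers of the colouring `P : [0,1] → κ`. -/
def stepping {κ : Type*} (W : UI → UI → ℝ) (P : UI → κ) : UI → UI → ℝ :=
  fun x y => stepAvg W (P ⁻¹' {P x}) (P ⁻¹' {P y})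

/-- A finite measurable partition of `[0,1]`, presented as a colouring with finitely many
colours, all of whose fibers are measurable. -/
def IsFinitePartition {κ : Type*} (P : UI → κ) : Prop :=
  Finite κ ∧ ∀ c : κ, MeasurableSet (P ⁻¹' {c})

/-- A graphon parameter: a real-valued function on graphons invariant under cut distance `0`. -/
def GraphonParam (θ : (UI → UI → ℝ) → ℝ) : Prop :=
  ∀ U W, IsGraphon U → IsGraphon W → cutDist U W = 0 → θ U = θ W

/-- The structuredness order: `U ⪯ W` iff `⟨U⟩ ⊆ ⟨W⟩`. -/
def structLE (U W : UI → UI → ℝ) : Prop := envelope U ⊆ envelope W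

/-- The strict structuredness order: `U ≺ W`. -/
def structLT (U W : UI → UI → ℝ) : Prop :=
  envelope U ⊆ envelope W ∧ ¬ envelope W ⊆ envelope U

/-- A cut distance compatible graphon parameter. -/
def CutDistCompatible (θ : (UI → UI → ℝ) → ℝ) : Prop :=
  ∀ U W, IsGraphon U → IsGraphon W → structLE U W → θ U ≤ θ W

/-- A cut distance identifying graphon parameter. -/
def CutDistIdentifying (θ : (UI → UI → ℝ) → ℝ) : Prop :=
  ∀ U W, IsGraphon U → IsGraphon W → structLT U W → θ U < θ W

/-- `θ` is continuous with respect to the `L¹` norm on graphons. -/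
def L1Continuous (θ : (UI → UI → ℝ) → ℝ) : Prop :=
  ∀ W, IsGraphon W → ∀ ε : ℝ, 0 < ε → ∃ δ : ℝ, 0 < δ ∧
    ∀ U, IsGraphon U → L1dist U W < δ → |θ U - θ W| < ε

/-- `θ` is continuous with respect to the cut distance. -/
def CutDistContinuous (θ : (UI → UI → ℝ) → ℝ) : Prop :=
  ∀ (Wn : ℕ → UI → UI → ℝ) (W : UI → UI → ℝ), (∀ n, IsGraphon (Wn n)) → IsGraphon W →
    Filter.Tendsto (fun n => cutDist (Wn n) W) Filter.atTop (nhds 0) →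
    Filter.Tendsto (fun n => θ (Wn n)) Filter.atTop (nhds (θ W))

/-- `H` is seminorming: `W ↦ |t(H,W)|^{1/e(H)}` is a seminorm on the space of kernels. -/
def IsSeminorming {n : ℕ} (G : SimpleGraph (Fin n)) [DecidableRel G.Adj] : Prop :=
  0 < edgeCount G ∧
  (∀ W₁ W₂ : UI → UI → ℝ, IsKernel W₁ → IsKernel W₂ →
    |homDensity G (fun x y => W₁ x y + W₂ x y)| ^ ((edgeCount G : ℝ)⁻¹) ≤
      |homDensity G W₁| ^ ((edgeCount G : ℝ)⁻¹) + |homDensity G W₂| ^ ((edgeCount G : ℝ)⁻¹)) ∧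
  (∀ (c : ℝ) (W : UI → UI → ℝ), IsKernel W →
    |homDensity G (fun x y => c * W x y)| ^ ((edgeCount G : ℝ)⁻¹) =
      |c| * |homDensity G W| ^ ((edgeCount G : ℝ)⁻¹))


/-- The parameter `INT_f(W) = ∫∫ f(W(x,y)) dx dy`. -/
def INTf (f : ℝ → ℝ) (W : UI → UI → ℝ) : ℝ := ∫ x : UI, ∫ y : UI, f (W x y)



namespace INTfAux
open Set Filter

def slopeInf (f : ℝ → ℝ) (p : ℝ) : ℝ := sInf ((fun r => (f r - f p)/(r - p)) '' Set.Ioc p 1)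

def line (f : ℝ → ℝ) (p : ℝ) (t : ℝ) : ℝ := f p + slopeInf f p * (t - p)

variable {f : ℝ → ℝ}

lemma bddBelow_slopes (hf : ConvexOn ℝ (Set.Icc (0:ℝ) 1) f) {p : ℝ} (hp : p ∈ Ioo (0:ℝ) 1) :
    (f p - f 0)/(p - 0) ∈ lowerBounds ((fun r => (f r - f p)/(r - p)) '' Set.Ioc p 1) := by
  rintro x ⟨r, hr, rfl⟩
  exact hf.slope_mono_adjacent (left_mem_Icc.2 zero_le_one)
    ⟨by linarith [hp.1, hr.1], hr.2⟩ hp.1 hr.1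

lemma nonempty_slopes {p : ℝ} (hp : p ∈ Ioo (0:ℝ) 1) :
    ((fun r => (f r - f p)/(r - p)) '' Set.Ioc p 1).Nonempty :=
  ⟨_, ⟨1, ⟨hp.2, le_refl 1⟩, rfl⟩⟩

lemma slopeInf_le (hf : ConvexOn ℝ (Set.Icc (0:ℝ) 1) f) {p r : ℝ}
    (hp : p ∈ Ioo (0:ℝ) 1) (hr : r ∈ Ioc p 1) :
    slopeInf f p ≤ (f r - f p)/(r - p) :=
  csInf_le ⟨_, bddBelow_slopes hf hp⟩ ⟨r, hr, rfl⟩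

lemma le_slopeInf (hf : ConvexOn ℝ (Set.Icc (0:ℝ) 1) f) {p s : ℝ}
    (hp : p ∈ Ioo (0:ℝ) 1) (hs : s ∈ Icc (0:ℝ) 1) (hsp : s < p) :
    (f p - f s)/(p - s) ≤ slopeInf f p := by
  refine le_csInf (nonempty_slopes hp) ?_
  rintro x ⟨r, hr, rfl⟩
  exact hf.slope_mono_adjacent hs ⟨by linarith [hs.1, hsp, hr.1], hr.2⟩ hsp hr.1

lemma support (hf : ConvexOn ℝ (Set.Icc (0:ℝ) 1) f) {p t : ℝ}
    (hp : p ∈ Ioo (0:ℝ) 1) (ht : t ∈ Icc (0:ℝ) 1) :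
    line f p t ≤ f t := by
  rcases lt_trichotomy t p with h | h | h
  · have h1 : (f p - f t)/(p - t) ≤ slopeInf f p := le_slopeInf hf hp ht h
    have hpt : 0 < p - t := by linarith
    rw [div_le_iff₀ hpt] at h1
    unfold line; nlinarith
  · subst h; simp [line]
  · have h1 : slopeInf f p ≤ (f t - f p)/(t - p) := slopeInf_le hf hp ⟨h, ht.2⟩
    have hpt : 0 < t - p := by linarith
    rw [le_div_iff₀ hpt] at h1
    unfold line; nlinarith

/-- slope lower bound -/
lemma slopeInf_lb (hf : ConvexOn ℝ (Set.Icc (0:ℝ) 1) f) {p : ℝ} (hp : p ∈ Ioo (0:ℝ) 1) :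
    (f p - f 0)/p ≤ slopeInf f p := by
  have := le_slopeInf hf hp (left_mem_Icc.2 zero_le_one) hp.1
  simpa using this

lemma slopeInf_ub (hf : ConvexOn ℝ (Set.Icc (0:ℝ) 1) f) {p : ℝ} (hp : p ∈ Ioo (0:ℝ) 1) :
    slopeInf f p ≤ (f 1 - f p)/(1 - p) :=
  slopeInf_le hf hp ⟨hp.2, le_refl 1⟩

/-- convex f on [0,1] is bounded. -/
lemma f_bounded (hf : ConvexOn ℝ (Set.Icc (0:ℝ) 1) f) :
    ∃ C : ℝ, 0 ≤ C ∧ ∀ t ∈ Icc (0:ℝ) 1, |f t| ≤ C := by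
  have hhalf : (1/2 : ℝ) ∈ Ioo (0:ℝ) 1 := by norm_num
  refine ⟨|f 0| + |f 1| + |f (1/2)| + |slopeInf f (1/2)|, by positivity, ?_⟩
  intro t ht
  have hub : f t ≤ (1 - t) * f 0 + t * f 1 := by
    have := hf.2 (left_mem_Icc.2 zero_le_one) (right_mem_Icc.2 zero_le_one)
      (by linarith [ht.2] : (0:ℝ) ≤ 1 - t) ht.1 (by ring)
    simpa using this
  have hlb : f (1/2) + slopeInf f (1/2) * (t - 1/2) ≤ f t := support hf hhalf ht
  have h1 : |slopeInf f (1/2) * (t - 1/2)| ≤ |slopeInf f (1/2)| := by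
    rw [abs_mul]
    have : |t - 1/2| ≤ 1 := by rw [abs_le]; constructor <;> linarith [ht.1, ht.2]
    nlinarith [abs_nonneg (slopeInf f (1/2))]
  rw [abs_le]; constructor
  · nlinarith [abs_nonneg (f 0), abs_nonneg (f 1), neg_abs_le (f (1/2)),
      neg_abs_le (slopeInf f (1/2) * (t - 1/2))]
  · nlinarith [le_abs_self (f 0), le_abs_self (f 1), neg_abs_le (f 0), neg_abs_le (f 1),
      abs_nonneg (f (1/2)), abs_nonneg (slopeInf f (1/2)), ht.1, ht.2]


instance : Nonempty (Set.Ioo (0:ℝ) 1) := ⟨⟨1/2, by norm_num⟩⟩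

def qsub : ℕ → Set.Ioo (0:ℝ) 1 :=
  (TopologicalSpace.denseSeq (Set.Ioo (0:ℝ) 1))

def qseq : ℕ → ℝ := fun n => (qsub n : ℝ)

lemma qseq_mem (n : ℕ) : qseq n ∈ Ioo (0:ℝ) 1 := (qsub n).2

lemma qseq_dense {t ε : ℝ} (ht : t ∈ Ioo (0:ℝ) 1) (hε : 0 < ε) :
    ∃ n, |qseq n - t| < ε := by
  have hd : DenseRange (qsub) := TopologicalSpace.denseRange_denseSeq _
  have : (⟨t, ht⟩ : Set.Ioo (0:ℝ) 1) ∈ closure (Set.range qsub) := hd _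
  rw [Metric.mem_closure_iff] at this
  obtain ⟨y, ⟨n, rfl⟩, hy⟩ := this ε hε
  refine ⟨n, ?_⟩
  have : dist (qseq n) t < ε := by
    rw [dist_comm] at hy
    simpa [Subtype.dist_eq, qseq] using hy
  simpa [Real.dist_eq] using this

def gk (f : ℝ → ℝ) : ℕ → ℝ → ℝ
  | 0 => line f (qseq 0)
  | (k+1) => fun t => max (gk f k t) (line f (qseq (k+1)) t)

def glim (f : ℝ → ℝ) (t : ℝ) : ℝ := ⨆ k, gk f k t

variable {f : ℝ → ℝ}

lemma gk_le_f (hf : ConvexOn ℝ (Set.Icc (0:ℝ) 1) f)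
    {t : ℝ} (ht : t ∈ Icc (0:ℝ) 1) : ∀ k, gk f k t ≤ f t := by
  intro k
  induction k with
  | zero => exact support hf (qseq_mem 0) ht
  | succ k ih => exact max_le ih (support hf (qseq_mem _) ht)

lemma gk_mono (f : ℝ → ℝ) (t : ℝ) : Monotone fun k => gk f k t :=
  monotone_nat_of_le_succ fun k => le_max_left _ _

lemma line_le_gk {i k : ℕ} (h : i ≤ k) (t : ℝ) : line f (qseq i) t ≤ gk f k t := by
  induction k with
  | zero => simp_all [gk, Nat.le_zero.mp h]
  | succ k ih =>
    rcases Nat.lt_or_ge i (k+1) with h' | h'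
    · exact le_trans (ih (Nat.lt_succ_iff.mp h')) (le_max_left _ _)
    · have : i = k+1 := le_antisymm h h'
      subst this; exact le_max_right _ _


lemma gk_bddAbove (hf : ConvexOn ℝ (Set.Icc (0:ℝ) 1) f) {t : ℝ} (ht : t ∈ Icc (0:ℝ) 1) :
    BddAbove (Set.range fun k => gk f k t) := by
  refine ⟨f t, ?_⟩; rintro x ⟨k, rfl⟩; exact gk_le_f hf ht k

lemma tendsto_gk (hf : ConvexOn ℝ (Set.Icc (0:ℝ) 1) f) {t : ℝ} (ht : t ∈ Icc (0:ℝ) 1) :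
    Tendsto (fun k => gk f k t) atTop (nhds (glim f t)) :=
  tendsto_atTop_ciSup (gk_mono f t) (gk_bddAbove hf ht)

lemma glim_le_f (hf : ConvexOn ℝ (Set.Icc (0:ℝ) 1) f) {t : ℝ} (ht : t ∈ Icc (0:ℝ) 1) :
    glim f t ≤ f t :=
  ciSup_le (gk_le_f hf ht)

lemma line_le_glim (hf : ConvexOn ℝ (Set.Icc (0:ℝ) 1) f) (i : ℕ) {t : ℝ} (ht : t ∈ Icc (0:ℝ) 1) :
    line f (qseq i) t ≤ glim f t :=
  le_trans (line_le_gk (le_refl i) t) (le_ciSup (gk_bddAbove hf ht) i)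

lemma line_continuous (f : ℝ → ℝ) (p : ℝ) : Continuous (line f p) := by
  unfold line; fun_prop

lemma gk_continuous (f : ℝ → ℝ) (k : ℕ) : Continuous (gk f k) := by
  induction k with
  | zero => exact line_continuous f _
  | succ k ih => exact ih.max (line_continuous f _)

lemma f_le_glim (hf : ConvexOn ℝ (Set.Icc (0:ℝ) 1) f) {t : ℝ} (ht : t ∈ Ioo (0:ℝ) 1) :
    f t ≤ glim f t := by
  obtain ⟨C, hC0, hC⟩ := f_bounded hf
  have ht0 : (0:ℝ) < t := ht.1
  have ht1 : t < 1 := ht.2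
  obtain ⟨M, hM⟩ : ∃ M : ℝ, M = 4*C/(1-t) + 4*C/t := ⟨_, rfl⟩
  have h5 : (0:ℝ) ≤ 4*C/(1-t) := div_nonneg (by linarith) (by linarith)
  have h6 : (0:ℝ) ≤ 4*C/t := div_nonneg (by linarith) (by linarith)
  have hM0 : 0 ≤ M := by rw [hM]; linarith
  have hcont : ContinuousAt f t := by
    have h1 : ConvexOn ℝ (Ioo (0:ℝ) 1) f := hf.subset Ioo_subset_Icc_self (convex_Ioo _ _)
    exact (ConvexOn.continuousOn isOpen_Ioo h1).continuousAt (isOpen_Ioo.mem_nhds ht)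
  refine le_of_forall_pos_le_add ?_
  intro ε hε
  rw [Metric.continuousAt_iff] at hcont
  obtain ⟨δ, hδ0, hδ⟩ := hcont (ε/2) (by positivity)
  obtain ⟨δ', hδ'⟩ : ∃ d : ℝ, d = min (min δ (ε/(2*(M+1)))) (min (t/2) ((1-t)/2)) := ⟨_, rfl⟩
  have hδ'0 : 0 < δ' := by
    rw [hδ']
    exact lt_min (lt_min hδ0 (div_pos hε (by linarith))) (lt_min (by linarith) (by linarith))
  obtain ⟨n, hn⟩ := qseq_dense ht hδ'0
  set q := qseq n with hq
  have hqm : q ∈ Ioo (0:ℝ) 1 := qseq_mem n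
  have habs := abs_lt.mp hn
  have hd1 : δ' ≤ δ := by rw [hδ']; exact le_trans (min_le_left _ _) (min_le_left _ _)
  have hd2 : δ' ≤ ε/(2*(M+1)) := by rw [hδ']; exact le_trans (min_le_left _ _) (min_le_right _ _)
  have hd3 : δ' ≤ t/2 := by rw [hδ']; exact le_trans (min_le_right _ _) (min_le_left _ _)
  have hd4 : δ' ≤ (1-t)/2 := by rw [hδ']; exact le_trans (min_le_right _ _) (min_le_right _ _)
  have hq2 : t/2 ≤ q := by linarith [habs.1]
  have hq3 : (1-t)/2 ≤ 1 - q := by linarith [habs.2]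
  have hq0 : (0:ℝ) < q := lt_of_lt_of_le (by linarith) hq2
  have hq1' : (0:ℝ) < 1 - q := lt_of_lt_of_le (by linarith) hq3
  have hfq := abs_le.mp (hC q (Ioo_subset_Icc_self hqm))
  have hf0 := abs_le.mp (hC 0 (left_mem_Icc.2 zero_le_one))
  have hf1 := abs_le.mp (hC 1 (right_mem_Icc.2 zero_le_one))
  -- slope upper bound
  have h1t : (1:ℝ) - t ≠ 0 := by linarith
  have htne : t ≠ 0 := by linarith
  have hmub : slopeInf f q ≤ M := by
    refine le_trans (slopeInf_ub hf hqm) ?_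
    rw [div_le_iff₀ hq1']
    have e1 : 4*C/(1-t) * ((1-t)/2) = 2*C := by field_simp; ring
    calc f 1 - f q ≤ 2*C := by linarith [hf1.2, hfq.1]
      _ = 4*C/(1-t) * ((1-t)/2) := e1.symm
      _ ≤ 4*C/(1-t) * (1-q) := mul_le_mul_of_nonneg_left hq3 h5
      _ ≤ M * (1-q) := mul_le_mul_of_nonneg_right (by rw [hM]; linarith) hq1'.le
  -- slope lower bound
  have hmlb : -M ≤ slopeInf f q := by
    refine le_trans ?_ (slopeInf_lb hf hqm)
    rw [le_div_iff₀ hq0]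
    have e2 : 4*C/t * (t/2) = 2*C := by field_simp; ring
    have s1 : 4*C/t * (t/2) ≤ 4*C/t * q := mul_le_mul_of_nonneg_left hq2 h6
    have s2 : 4*C/t * q ≤ M * q := mul_le_mul_of_nonneg_right (by rw [hM]; linarith) hq0.le
    linarith [hfq.1, hf0.2]
  have hmabs : |slopeInf f q| ≤ M := abs_le.2 ⟨hmlb, hmub⟩
  -- the slope term is small
  have hterm : |slopeInf f q * (t - q)| ≤ M * δ' := by
    rw [abs_mul]
    have h7 : |t - q| ≤ δ' := by rw [abs_sub_comm]; exact hn.le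
    exact mul_le_mul hmabs h7 (abs_nonneg _) hM0
  have hMd : M * δ' ≤ ε/2 := by
    have he' : ε/(2*(M+1)) * (M+1) = ε/2 := by field_simp
    calc M * δ' ≤ M * (ε/(2*(M+1))) :=
          mul_le_mul_of_nonneg_left hd2 hM0
      _ ≤ (M+1) * (ε/(2*(M+1))) := by
          apply mul_le_mul_of_nonneg_right (by linarith) (by positivity)
      _ = ε/2 := by rw [mul_comm]; exact he'
  -- continuity term
  have hfc : |f q - f t| < ε/2 := by
    have : dist q t < δ := lt_of_lt_of_le hn hd1
    simpa [Real.dist_eq] using hδ this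
  -- assemble
  have hg : line f q t ≤ glim f t := line_le_glim hf n (Ioo_subset_Icc_self ht)
  have hline : f q + slopeInf f q * (t - q) = line f q t := rfl
  have h8 := neg_abs_le (slopeInf f q * (t - q))
  have h9 := abs_le.mp hfc.le
  have key : f t - ε ≤ f q + slopeInf f q * (t - q) := by linarith [h9.1]
  linarith [key, hg]

/-- uniform bound for all gk and glim on [0,1] -/
lemma gk_abs_le (hf : ConvexOn ℝ (Set.Icc (0:ℝ) 1) f) {C : ℝ} (hC0 : 0 ≤ C)
    (hC : ∀ t ∈ Icc (0:ℝ) 1, |f t| ≤ C) {t : ℝ} (ht : t ∈ Icc (0:ℝ) 1) (k : ℕ) :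
    |gk f k t| ≤ C + (C + |slopeInf f (qseq 0)|) := by
  have hub : gk f k t ≤ C := le_trans (gk_le_f hf ht k) (abs_le.mp (hC t ht)).2
  have hlb : -(C + |slopeInf f (qseq 0)|) ≤ gk f k t := by
    have h1 : line f (qseq 0) t ≤ gk f k t := line_le_gk (Nat.zero_le k) t
    have hq := qseq_mem 0
    have h2 := abs_le.mp (hC (qseq 0) (Ioo_subset_Icc_self hq))
    have h3 : |slopeInf f (qseq 0) * (t - qseq 0)| ≤ |slopeInf f (qseq 0)| := by
      rw [abs_mul]
      have : |t - qseq 0| ≤ 1 := by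
        rw [abs_le]; constructor <;>
          [linarith [ht.1, hq.2, ht.2, hq.1]; linarith [ht.2, hq.1]]
      nlinarith [abs_nonneg (slopeInf f (qseq 0))]
    have h4 := neg_abs_le (slopeInf f (qseq 0) * (t - qseq 0))
    have hline : f (qseq 0) + slopeInf f (qseq 0) * (t - qseq 0) = line f (qseq 0) t := rfl
    linarith [h2.1]
  rw [abs_le]
  exact ⟨by linarith [abs_nonneg (slopeInf f (qseq 0))], by linarith [abs_nonneg (slopeInf f (qseq 0))]⟩

lemma glim_abs_le (hf : ConvexOn ℝ (Set.Icc (0:ℝ) 1) f) {C : ℝ} (hC0 : 0 ≤ C)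
    (hC : ∀ t ∈ Icc (0:ℝ) 1, |f t| ≤ C) {t : ℝ} (ht : t ∈ Icc (0:ℝ) 1) :
    |glim f t| ≤ C + (C + |slopeInf f (qseq 0)|) := by
  have h1 := tendsto_gk hf ht
  have h2 : ∀ k, |gk f k t| ≤ C + (C + |slopeInf f (qseq 0)|) := gk_abs_le hf hC0 hC ht
  have : Tendsto (fun k => |gk f k t|) atTop (nhds |glim f t|) := h1.abs
  exact le_of_tendsto this (Eventually.of_forall h2)

lemma integrable_bdd {X : Type*} [MeasurableSpace X] {μ : Measure X} [IsFiniteMeasure μ]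
    {h : X → ℝ} (hm : AEStronglyMeasurable h μ) {C : ℝ} (hb : ∀ z, |h z| ≤ C) :
    Integrable h μ :=
  (integrable_const C).mono' hm (Eventually.of_forall fun z => by
    simpa [Real.norm_eq_abs] using hb z)

def pm (φ : MPB) : UI × UI → UI × UI := fun z => (φ.toFun z.1, φ.toFun z.2)

lemma pm_mp (φ : MPB) : MeasurePreserving (pm φ) volume volume := by
  have h := φ.measurePreserving.prod φ.measurePreserving
  rw [← Measure.volume_eq_prod] at h
  exact h

lemma pm_emb (φ : MPB) : MeasurableEmbedding (pm φ) := by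
  apply Measurable.measurableEmbedding (pm_mp φ).measurable
  intro a b hab
  have h1 := φ.bijective.injective (congrArg Prod.fst hab)
  have h2 := φ.bijective.injective (congrArg Prod.snd hab)
  exact Prod.ext h1 h2

lemma integral_pm (φ : MPB) (h : UI × UI → ℝ) :
    ∫ z, h (pm φ z) = ∫ z, h z :=
  (pm_mp φ).integral_comp (pm_emb φ) h

lemma measure_pm (φ : MPB) {A : Set (UI × UI)} (hA : MeasurableSet A) :
    volume (pm φ ⁻¹' A) = volume A :=
  (pm_mp φ).measure_preimage hA.nullMeasurableSet

/-- upgrade weak* convergence on rectangles to all measurable sets -/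
lemma weakstar_all {Fn : ℕ → UI × UI → ℝ} {F : UI × UI → ℝ}
    (hFn : ∀ n, Measurable (Fn n)) (hF : Measurable F)
    (hbn : ∀ n z, |Fn n z| ≤ 1) (hb : ∀ z, |F z| ≤ 1)
    (hconv : ∀ S T : Set UI, MeasurableSet S → MeasurableSet T →
      Tendsto (fun n => ∫ z in S ×ˢ T, Fn n z) atTop (nhds (∫ z in S ×ˢ T, F z))) :
    ∀ {A : Set (UI × UI)}, MeasurableSet A →
      Tendsto (fun n => ∫ z in A, Fn n z) atTop (nhds (∫ z in A, F z)) := by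
  have hFni : ∀ n, Integrable (Fn n) (volume : Measure (UI × UI)) :=
    fun n => integrable_bdd (hFn n).aestronglyMeasurable (hbn n)
  have hFi : Integrable F (volume : Measure (UI × UI)) :=
    integrable_bdd hF.aestronglyMeasurable hb
  apply MeasurableSpace.induction_on_inter
    (C := fun A _ => Tendsto (fun n => ∫ z in A, Fn n z) atTop (nhds (∫ z in A, F z)))
    generateFrom_prod.symm isPiSystem_prod
  · simp only [Measure.restrict_empty, integral_zero_measure]
    exact tendsto_const_nhds
  · rintro t ⟨S, hS, T, hT, rfl⟩
    exact hconv S T hS hT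
  · intro t ht hC
    have huniv : Tendsto (fun n => ∫ z, Fn n z) atTop (nhds (∫ z, F z)) := by
      have h := hconv univ univ MeasurableSet.univ MeasurableSet.univ
      simpa [Set.univ_prod_univ, Measure.restrict_univ] using h
    have e1 : ∀ n, ∫ z in tᶜ, Fn n z = (∫ z, Fn n z) - ∫ z in t, Fn n z := by
      intro n
      have := integral_add_compl ht (hFni n)
      linarith
    have e2 : ∫ z in tᶜ, F z = (∫ z, F z) - ∫ z in t, F z := by
      have := integral_add_compl ht hFi
      linarith
    rw [e2]
    exact Tendsto.congr (fun n => (e1 n).symm) (huniv.sub hC)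
  · intro g hdisj hgm hC
    have hiu : ∀ n, ∫ z in ⋃ i, g i, Fn n z = ∑' i, ∫ z in g i, Fn n z :=
      fun n => integral_iUnion hgm hdisj (hFni n).integrableOn
    have hiuF : ∫ z in ⋃ i, g i, F z = ∑' i, ∫ z in g i, F z :=
      integral_iUnion hgm hdisj hFi.integrableOn
    rw [hiuF]
    have hsum : Summable (fun i => (volume (g i)).toReal) := by
      apply ENNReal.summable_toReal
      rw [← measure_iUnion hdisj hgm]
      exact measure_ne_top _ _
    refine Tendsto.congr (fun n => (hiu n).symm) ?_
    apply tendsto_tsum_of_dominated_convergence hsum hC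
    apply Eventually.of_forall
    intro n i
    calc ‖∫ z in g i, Fn n z‖ ≤ 1 * (volume (g i)).toReal := by
          apply norm_setIntegral_le_of_norm_le_const (measure_lt_top _ _)
          · intro x _; simpa [Real.norm_eq_abs] using hbn n x
      _ = (volume (g i)).toReal := one_mul _


/-- Step B : if versions of `G` converge to something vanishing on `A`, then `A` is no
larger than the zero set of `G`. -/
lemma measure_le_zeroset {G : UI × UI → ℝ} (hG : Measurable G)
    (hG0 : ∀ z, 0 ≤ G z) (hG1 : ∀ z, G z ≤ 1)
    (Φ : ℕ → UI × UI → UI × UI) (hΦ : ∀ n, MeasurePreserving (Φ n) volume volume)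
    {A : Set (UI × UI)} (hA : MeasurableSet A)
    (hconv : Tendsto (fun n => ∫ z in A, G (Φ n z)) atTop (nhds 0)) :
    volume A ≤ volume {z | G z = 0} := by
  set ν : Measure (UI × UI) := volume with hν
  -- step 1: for every ε > 0, (ν A).toReal ≤ (ν {G ≤ ε}).toReal
  have step1 : ∀ ε : ℝ, 0 < ε → (ν A).toReal ≤ (ν {z | G z ≤ ε}).toReal := by
    intro ε hε
    have hmeasle : MeasurableSet {z | G z ≤ ε} := measurableSet_le hG measurable_const
    have key : ∀ n, (ν A).toReal ≤ (ν {z | G z ≤ ε}).toReal + ε⁻¹ * ∫ z in A, G (Φ n z) := by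
      intro n
      have hGΦm : Measurable fun z => G (Φ n z) := hG.comp (hΦ n).measurable
      have hint : Integrable (fun z => G (Φ n z)) ν :=
        integrable_bdd hGΦm.aestronglyMeasurable (C := 1)
          (fun z => abs_le.2 ⟨by linarith [hG0 (Φ n z)], hG1 _⟩)
      set S : Set (UI × UI) := {z | ε < G (Φ n z)} with hS
      have hSm : MeasurableSet S := measurableSet_lt measurable_const hGΦm
      have hsplit : ν (A ∩ S) + ν (A \ S) = ν A := measure_inter_add_diff A hSm
      -- Markov bound on A ∩ S
      have hmark : ε * (ν (A ∩ S)).toReal ≤ ∫ z in A ∩ S, G (Φ n z) := by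
        have h := setIntegral_ge_of_const_le_real (hA.inter hSm) (measure_ne_top _ _)
          (fun x hx => (hx.2 : ε < G (Φ n x)).le) hint.integrableOn
        exact h
      have hmono : ∫ z in A ∩ S, G (Φ n z) ≤ ∫ z in A, G (Φ n z) :=
        setIntegral_mono_set hint.integrableOn
          (Eventually.of_forall fun z => hG0 _) (HasSubset.Subset.eventuallyLE inter_subset_left)
      have h1 : (ν (A ∩ S)).toReal ≤ ε⁻¹ * ∫ z in A, G (Φ n z) := by
        rw [← mul_le_mul_iff_right₀ hε, ← mul_assoc, mul_inv_cancel₀ (ne_of_gt hε), one_mul]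
        exact le_trans hmark hmono
      have h2 : ν (A \ S) ≤ ν {z | G z ≤ ε} := by
        have hsub : A \ S ⊆ Φ n ⁻¹' {z | G z ≤ ε} := by
          intro z hz
          simp only [mem_preimage, mem_setOf_eq]
          exact not_lt.1 hz.2
        calc ν (A \ S) ≤ ν (Φ n ⁻¹' {z | G z ≤ ε}) := measure_mono hsub
          _ = ν {z | G z ≤ ε} := (hΦ n).measure_preimage hmeasle.nullMeasurableSet
      have h2' : (ν (A \ S)).toReal ≤ (ν {z | G z ≤ ε}).toReal :=
        ENNReal.toReal_mono (measure_ne_top _ _) h2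
      have hadd : (ν A).toReal = (ν (A ∩ S)).toReal + (ν (A \ S)).toReal := by
        rw [← ENNReal.toReal_add (measure_ne_top _ _) (measure_ne_top _ _), hsplit]
      linarith
    have hlim : Tendsto
        (fun n => (ν {z | G z ≤ ε}).toReal + ε⁻¹ * ∫ z in A, G (Φ n z)) atTop
        (nhds ((ν {z | G z ≤ ε}).toReal)) := by
      have := (hconv.const_mul ε⁻¹).const_add ((ν {z | G z ≤ ε}).toReal)
      simpa using this
    exact ge_of_tendsto hlim (Eventually.of_forall key)
  -- step 2: pass to the limit ε = 1/(k+1) → 0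
  have hiInter : ⋂ k : ℕ, {z | G z ≤ 1/((k:ℝ)+1)} = {z | G z = 0} := by
    ext z
    simp only [mem_iInter, mem_setOf_eq]
    constructor
    · intro h
      refine le_antisymm ?_ (hG0 z)
      by_contra hpos
      push_neg at hpos
      obtain ⟨k, hk⟩ := exists_nat_one_div_lt hpos
      exact absurd (h k) (not_le.2 hk)
    · intro h k
      rw [h]; positivity
  have hanti : Antitone fun k : ℕ => {z | G z ≤ 1/((k:ℝ)+1)} := by
    intro a b hab z hz
    simp only [mem_setOf_eq] at *
    refine le_trans hz ?_
    apply one_div_le_one_div_of_le (by positivity)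
    have : (a:ℝ) ≤ b := Nat.cast_le.2 hab
    linarith
  have hmeas : ∀ k : ℕ, NullMeasurableSet {z | G z ≤ 1/((k:ℝ)+1)} ν :=
    fun k => (measurableSet_le hG measurable_const).nullMeasurableSet
  have hlim2 : Tendsto (fun k : ℕ => ν {z | G z ≤ 1/((k:ℝ)+1)}) atTop
      (nhds (ν {z | G z = 0})) := by
    have := tendsto_measure_iInter_atTop hmeas hanti ⟨0, measure_ne_top _ _⟩
    rwa [hiInter] at this
  have hlim3 : Tendsto (fun k : ℕ => (ν {z | G z ≤ 1/((k:ℝ)+1)}).toReal) atTop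
      (nhds ((ν {z | G z = 0}).toReal)) :=
    (ENNReal.tendsto_toReal (measure_ne_top _ _)).comp hlim2
  have final : (ν A).toReal ≤ (ν {z | G z = 0}).toReal :=
    ge_of_tendsto hlim3 (Eventually.of_forall fun k => step1 _ (by positivity))
  exact (ENNReal.toReal_le_toReal (measure_ne_top ν A) (measure_ne_top ν _)).1 final


lemma line_abs_le {p t : ℝ} (hp : p ∈ Ioo (0:ℝ) 1) (ht : t ∈ Icc (0:ℝ) 1) :
    |line f p t| ≤ |f p| + |slopeInf f p| := by
  unfold line
  refine le_trans (abs_add_le _ _) ?_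
  rw [abs_mul]
  have h1 : |t - p| ≤ 1 := by
    rw [abs_le]; constructor <;> [linarith [ht.1, hp.2]; linarith [ht.2, hp.1]]
  nlinarith [abs_nonneg (slopeInf f p)]

/-- Step A core : `∫ glim f ∘ F ≤ ∫ glim f ∘ G`. -/
lemma stepA (hf : ConvexOn ℝ (Set.Icc (0:ℝ) 1) f) {B : ℝ}
    (hgkB : ∀ k, ∀ t ∈ Icc (0:ℝ) 1, |gk f k t| ≤ B)
    (hglimB : ∀ t ∈ Icc (0:ℝ) 1, |glim f t| ≤ B)
    {F G : UI × UI → ℝ} (hFm : Measurable F) (hGm : Measurable G)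
    (hFr : ∀ z, F z ∈ Icc (0:ℝ) 1) (hGr : ∀ z, G z ∈ Icc (0:ℝ) 1)
    {Fn : ℕ → UI × UI → ℝ} (hFnm : ∀ n, Measurable (Fn n))
    (hFnr : ∀ n z, Fn n z ∈ Icc (0:ℝ) 1)
    (hFnG : ∀ n, ∫ z, glim f (Fn n z) = ∫ z, glim f (G z))
    (hAll : ∀ {A : Set (UI × UI)}, MeasurableSet A →
      Tendsto (fun n => ∫ z in A, Fn n z) atTop (nhds (∫ z in A, F z))) :
    ∫ z, glim f (F z) ≤ ∫ z, glim f (G z) := by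
  have hgkFi : ∀ k, Integrable (fun z => gk f k (F z)) (volume : Measure (UI × UI)) :=
    fun k => integrable_bdd ((gk_continuous f k).measurable.comp hFm).aestronglyMeasurable
      (fun z => hgkB k _ (hFr z))
  have hgkFni : ∀ k n, Integrable (fun z => gk f k (Fn n z)) (volume : Measure (UI × UI)) :=
    fun k n => integrable_bdd ((gk_continuous f k).measurable.comp (hFnm n)).aestronglyMeasurable
      (fun z => hgkB k _ (hFnr n z))
  have hlineFni : ∀ (p : ℕ) n, Integrable (fun z => line f (qseq p) (Fn n z))
      (volume : Measure (UI × UI)) :=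
    fun p n => integrable_bdd
      (((line_continuous f (qseq p)).measurable).comp (hFnm n)).aestronglyMeasurable
      (fun z => line_abs_le (qseq_mem p) (hFnr n z))
  have hglimFm : Measurable (fun z => glim f (F z)) := by
    apply measurable_of_tendsto_metrizable
      (f := fun k => fun z => gk f k (F z))
      (fun k => (gk_continuous f k).measurable.comp hFm)
    rw [tendsto_pi_nhds]
    exact fun z => tendsto_gk hf (hFr z)
  have hglimFnm : ∀ n, Measurable (fun z => glim f (Fn n z)) := by
    intro n
    apply measurable_of_tendsto_metrizable
      (f := fun k => fun z => gk f k (Fn n z))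
      (fun k => (gk_continuous f k).measurable.comp (hFnm n))
    rw [tendsto_pi_nhds]
    exact fun z => tendsto_gk hf (hFnr n z)
  have hglimFi : Integrable (fun z => glim f (F z)) (volume : Measure (UI × UI)) :=
    integrable_bdd hglimFm.aestronglyMeasurable (fun z => hglimB _ (hFr z))
  have hglimFni : ∀ n, Integrable (fun z => glim f (Fn n z)) (volume : Measure (UI × UI)) :=
    fun n => integrable_bdd (hglimFnm n).aestronglyMeasurable (fun z => hglimB _ (hFnr n z))
  -- affine convergence on arbitrary measurable sets
  have affine : ∀ (p : ℝ) {A : Set (UI × UI)}, MeasurableSet A →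
      Tendsto (fun n => ∫ z in A, line f p (Fn n z)) atTop
        (nhds (∫ z in A, line f p (F z))) := by
    intro p A hA
    have hexp : ∀ (V : UI × UI → ℝ), Measurable V → (∀ z, V z ∈ Icc (0:ℝ) 1) →
        ∫ z in A, line f p (V z) =
          (f p - slopeInf f p * p) * (volume A).toReal + slopeInf f p * ∫ z in A, V z := by
      intro V hVm hVr
      have hVi : IntegrableOn V A volume :=
        (integrable_bdd hVm.aestronglyMeasurable (C := 1)
          (fun z => abs_le.2 ⟨by linarith [(hVr z).1], (hVr z).2⟩)).integrableOn
      have hfun : ∀ z, line f p (V z) = (f p - slopeInf f p * p) + slopeInf f p * V z := by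
        intro z; unfold line; ring
      rw [show (fun z => line f p (V z)) = fun z => (f p - slopeInf f p * p) + slopeInf f p * V z
          from funext hfun]
      rw [integral_add (integrableOn_const (measure_ne_top _ _) :
            IntegrableOn (fun _ => f p - slopeInf f p * p) A volume)
          (hVi.const_mul _), integral_const_mul, setIntegral_const, smul_eq_mul, mul_comm]
      rfl
    rw [hexp F hFm hFr]
    have h1 : Tendsto (fun n => (f p - slopeInf f p * p) * (volume A).toReal
        + slopeInf f p * ∫ z in A, Fn n z) atTop
        (nhds ((f p - slopeInf f p * p) * (volume A).toReal
        + slopeInf f p * ∫ z in A, F z)) :=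
      (((hAll hA).const_mul _).const_add _)
    refine Tendsto.congr (fun n => ?_) h1
    exact (hexp (Fn n) (hFnm n) (hFnr n)).symm
  -- the eventual inequality, by induction on k
  have main : ∀ k : ℕ, ∀ A : Set (UI × UI), MeasurableSet A → ∀ ε : ℝ, 0 < ε →
      ∀ᶠ n in atTop, ∫ z in A, gk f k (F z) ≤ (∫ z in A, gk f k (Fn n z)) + ε := by
    intro k
    induction k with
    | zero =>
      intro A hA ε hε
      have h : ∀ᶠ n in atTop,
          (∫ z in A, line f (qseq 0) (F z)) - ε < ∫ z in A, line f (qseq 0) (Fn n z) :=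
        (affine (qseq 0) hA).eventually (eventually_gt_nhds (by linarith))
      filter_upwards [h] with n hn
      show ∫ z in A, line f (qseq 0) (F z) ≤ (∫ z in A, line f (qseq 0) (Fn n z)) + ε
      linarith
    | succ k ih =>
      intro A hA ε hε
      set S : Set (UI × UI) := {z | gk f k (F z) < line f (qseq (k+1)) (F z)} with hS
      have hSm : MeasurableSet S :=
        measurableSet_lt ((gk_continuous f k).measurable.comp hFm)
          (((line_continuous f (qseq (k+1))).measurable).comp hFm)
      have hAp : MeasurableSet (A ∩ S) := hA.inter hSm
      have hAm : MeasurableSet (A \ S) := hA.diff hSm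
      have heq1 : ∀ z ∈ A ∩ S, gk f (k+1) (F z) = line f (qseq (k+1)) (F z) :=
        fun z hz => max_eq_right (le_of_lt hz.2)
      have heq2 : ∀ z ∈ A \ S, gk f (k+1) (F z) = gk f k (F z) :=
        fun z hz => max_eq_left (not_lt.1 hz.2)
      have hev1 := (affine (qseq (k+1)) hAp).eventually
        (eventually_gt_nhds (show (∫ z in A ∩ S, line f (qseq (k+1)) (F z)) - ε/2
          < ∫ z in A ∩ S, line f (qseq (k+1)) (F z) by linarith))
      have hev2 := ih (A \ S) hAm (ε/2) (by linarith)
      filter_upwards [hev1, hev2] with n hn1 hn2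
      have hsplit : ∫ z in A, gk f (k+1) (F z)
          = (∫ z in A ∩ S, gk f (k+1) (F z)) + ∫ z in A \ S, gk f (k+1) (F z) :=
        (integral_inter_add_diff hSm (hgkFi (k+1)).integrableOn).symm
      have hsplit' : ∫ z in A, gk f (k+1) (Fn n z)
          = (∫ z in A ∩ S, gk f (k+1) (Fn n z)) + ∫ z in A \ S, gk f (k+1) (Fn n z) :=
        (integral_inter_add_diff hSm (hgkFni (k+1) n).integrableOn).symm
      have hc1 : ∫ z in A ∩ S, gk f (k+1) (F z) = ∫ z in A ∩ S, line f (qseq (k+1)) (F z) :=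
        setIntegral_congr_fun hAp heq1
      have hc2 : ∫ z in A \ S, gk f (k+1) (F z) = ∫ z in A \ S, gk f k (F z) :=
        setIntegral_congr_fun hAm heq2
      have hp1 : ∫ z in A ∩ S, line f (qseq (k+1)) (Fn n z)
          ≤ ∫ z in A ∩ S, gk f (k+1) (Fn n z) :=
        setIntegral_mono_on (hlineFni (k+1) n).integrableOn
          (hgkFni (k+1) n).integrableOn hAp (fun z _ => le_max_right _ _)
      have hp2 : ∫ z in A \ S, gk f k (Fn n z) ≤ ∫ z in A \ S, gk f (k+1) (Fn n z) :=
        setIntegral_mono_on (hgkFni k n).integrableOn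
          (hgkFni (k+1) n).integrableOn hAm (fun z _ => le_max_left _ _)
      rw [hsplit, hsplit', hc1, hc2]
      linarith
  -- conclude for each k over the whole space
  have univle : ∀ k, ∫ z, gk f k (F z) ≤ ∫ z, glim f (G z) := by
    intro k
    refine le_of_forall_pos_le_add ?_
    intro ε hε
    obtain ⟨n, hn⟩ := (main k univ MeasurableSet.univ ε hε).exists
    simp only [Measure.restrict_univ] at hn
    have h2 : ∫ z, gk f k (Fn n z) ≤ ∫ z, glim f (Fn n z) :=
      integral_mono (hgkFni k n) (hglimFni n)
        (fun z => le_ciSup (gk_bddAbove hf (hFnr n z)) k)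
    calc ∫ z, gk f k (F z) ≤ (∫ z, gk f k (Fn n z)) + ε := hn
      _ ≤ (∫ z, glim f (Fn n z)) + ε := by linarith
      _ = (∫ z, glim f (G z)) + ε := by rw [hFnG n]
  -- monotone convergence in k
  have mono_int : Tendsto (fun k => ∫ z, gk f k (F z)) atTop (nhds (∫ z, glim f (F z))) :=
    integral_tendsto_of_tendsto_of_monotone hgkFi hglimFi
      (Eventually.of_forall fun z => gk_mono f (F z))
      (Eventually.of_forall fun z => tendsto_gk hf (hFr z))
  exact le_of_tendsto mono_int (Eventually.of_forall univle)


def idMPB : MPB := ⟨fun x => x, Function.bijective_id, MeasurePreserving.id _⟩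

lemma glim_measurable (hf : ConvexOn ℝ (Set.Icc (0:ℝ) 1) f)
    {X : Type*} [MeasurableSpace X] {V : X → ℝ} (hVm : Measurable V)
    (hVr : ∀ z, V z ∈ Icc (0:ℝ) 1) : Measurable fun z => glim f (V z) := by
  apply measurable_of_tendsto_metrizable
    (f := fun k => fun z => gk f k (V z))
    (fun k => (gk_continuous f k).measurable.comp hVm)
  rw [tendsto_pi_nhds]
  exact fun z => tendsto_gk hf (hVr z)

lemma iter_eq {H : UI × UI → ℝ} (hi : Integrable H (volume : Measure (UI × UI))) :
    ∫ x : UI, ∫ y : UI, H (x, y) = ∫ z, H z := by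
  have hi' : Integrable H ((volume : Measure UI).prod volume) := by
    rwa [← Measure.volume_eq_prod]
  rw [Measure.volume_eq_prod]
  exact integral_integral hi'

lemma rect_eq {H : UI × UI → ℝ} (hi : Integrable H (volume : Measure (UI × UI)))
    (S T : Set UI) : ∫ z in S ×ˢ T, H z = ∫ x in S, ∫ y in T, H (x, y) := by
  have hi' : IntegrableOn H (S ×ˢ T) ((volume : Measure UI).prod volume) := by
    rw [← Measure.volume_eq_prod]; exact hi.integrableOn
  rw [Measure.volume_eq_prod]
  exact setIntegral_prod H hi'

lemma decomp (hf : ConvexOn ℝ (Set.Icc (0:ℝ) 1) f)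
    {V : UI × UI → ℝ} (hVm : Measurable V) (hVr : ∀ z, V z ∈ Icc (0:ℝ) 1) :
    Integrable (fun z => f (V z)) (volume : Measure (UI × UI)) ∧
    ∫ z, f (V z) = (∫ z, glim f (V z))
      + (f 0 - glim f 0) * (volume {z | V z = 0}).toReal
      + (f 1 - glim f 1) * (volume {z | V z = 1}).toReal := by
  obtain ⟨C, hC0, hC⟩ := f_bounded hf
  have h0m : MeasurableSet {z : UI × UI | V z = 0} := hVm (measurableSet_singleton 0)
  have h1m : MeasurableSet {z : UI × UI | V z = 1} := hVm (measurableSet_singleton 1)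
  have hglimVm : Measurable fun z => glim f (V z) := glim_measurable hf hVm hVr
  have hglimVi : Integrable (fun z => glim f (V z)) (volume : Measure (UI × UI)) :=
    integrable_bdd hglimVm.aestronglyMeasurable (fun z => glim_abs_le hf hC0 hC (hVr z))
  have hind1 : Integrable ({z : UI × UI | V z = 0}.indicator fun _ => f 0 - glim f 0)
      (volume : Measure (UI × UI)) := (integrable_const _).indicator h0m
  have hind2 : Integrable ({z : UI × UI | V z = 1}.indicator fun _ => f 1 - glim f 1)
      (volume : Measure (UI × UI)) := (integrable_const _).indicator h1m
  have hpt : ∀ z, f (V z) = glim f (V z)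
      + ({z : UI × UI | V z = 0}.indicator fun _ => f 0 - glim f 0) z
      + ({z : UI × UI | V z = 1}.indicator fun _ => f 1 - glim f 1) z := by
    intro z
    rcases eq_or_ne (V z) 0 with h0 | h0
    · have hm1 : z ∈ {z : UI × UI | V z = 0} := h0
      have hm2 : z ∉ {z : UI × UI | V z = 1} := by
        simp only [mem_setOf_eq, h0]; norm_num
      rw [indicator_of_mem hm1, indicator_of_notMem hm2, h0]
      ring
    rcases eq_or_ne (V z) 1 with h1 | h1
    · have hm1 : z ∉ {z : UI × UI | V z = 0} := by
        simp only [mem_setOf_eq, h1]; norm_num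
      have hm2 : z ∈ {z : UI × UI | V z = 1} := h1
      rw [indicator_of_mem hm2, indicator_of_notMem hm1, h1]
      ring
    · have hio : V z ∈ Ioo (0:ℝ) 1 := by
        rcases hVr z with ⟨ha, hb⟩
        exact ⟨lt_of_le_of_ne ha (Ne.symm h0), lt_of_le_of_ne hb h1⟩
      have heq : f (V z) = glim f (V z) :=
        le_antisymm (f_le_glim hf hio) (glim_le_f hf (hVr z))
      have hm1 : z ∉ {z : UI × UI | V z = 0} := h0
      have hm2 : z ∉ {z : UI × UI | V z = 1} := h1
      rw [indicator_of_notMem hm1, indicator_of_notMem hm2, heq]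
      ring
  have hfun : (fun z => f (V z)) = fun z => glim f (V z)
      + ({z : UI × UI | V z = 0}.indicator fun _ => f 0 - glim f 0) z
      + ({z : UI × UI | V z = 1}.indicator fun _ => f 1 - glim f 1) z := funext hpt
  constructor
  · rw [hfun]; exact (hglimVi.add hind1).add hind2
  · have hsum1 : Integrable (fun z => glim f (V z)
        + ({z : UI × UI | V z = 0}.indicator fun _ => f 0 - glim f 0) z)
        (volume : Measure (UI × UI)) := hglimVi.add hind1
    rw [hfun, integral_add hsum1 hind2, integral_add hglimVi hind1,
      integral_indicator_const _ h0m, integral_indicator_const _ h1m,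
      smul_eq_mul, smul_eq_mul]
    simp only [measureReal_def]
    ring


end INTfAux

/-- For every convex (not necessarily continuous) `f : [0,1] → ℝ`, the graphon
parameter `INT_f` is cut distance compatible: `U ⪯ W` implies `INT_f(U) ≤ INT_f(W)`. -/
theorem INTf_convex_cutDistCompatible (f : ℝ → ℝ)
    (hf : ConvexOn ℝ (Set.Icc (0:ℝ) 1) f)
    (U W : UI → UI → ℝ) (hU : IsGraphon U) (hW : IsGraphon W)
    (hUW : structLE U W) :
    INTf f U ≤ INTf f W := by
  classical
  obtain ⟨C, hC0, hC⟩ := INTfAux.f_bounded hf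
  -- `U` belongs to its own envelope, hence to that of `W`
  have hUU : U ∈ envelope U := by
    refine ⟨hU, fun _ => INTfAux.idMPB, ?_⟩
    intro S T hS hT
    exact tendsto_const_nhds
  obtain ⟨-, π, hπ⟩ := hUW hUU
  set F : UI × UI → ℝ := Function.uncurry U with hFdef
  set G : UI × UI → ℝ := Function.uncurry W with hGdef
  set Φ : ℕ → UI × UI → UI × UI := fun n => INTfAux.pm (π n) with hΦdef
  have hFm : Measurable F := hU.1
  have hGm : Measurable G := hW.1
  have hFr : ∀ z, F z ∈ Set.Icc (0:ℝ) 1 := fun z => hU.2.2 z.1 z.2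
  have hGr : ∀ z, G z ∈ Set.Icc (0:ℝ) 1 := fun z => hW.2.2 z.1 z.2
  have habs1 : ∀ z, |F z| ≤ 1 :=
    fun z => abs_le.2 ⟨by linarith [(hFr z).1], (hFr z).2⟩
  have hΦ : ∀ n, MeasurePreserving (Φ n) volume volume := fun n => INTfAux.pm_mp (π n)
  have hFnm : ∀ n, Measurable fun z => G (Φ n z) := fun n => hGm.comp (hΦ n).measurable
  have hFnr : ∀ n z, G (Φ n z) ∈ Set.Icc (0:ℝ) 1 := fun n z => hGr _
  have habsn : ∀ n z, |G (Φ n z)| ≤ 1 :=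
    fun n z => abs_le.2 ⟨by linarith [(hFnr n z).1], (hFnr n z).2⟩
  have hFi : Integrable F (volume : Measure (UI × UI)) :=
    INTfAux.integrable_bdd hFm.aestronglyMeasurable habs1
  have hFni : ∀ n, Integrable (fun z => G (Φ n z)) (volume : Measure (UI × UI)) :=
    fun n => INTfAux.integrable_bdd (hFnm n).aestronglyMeasurable (habsn n)
  -- rectangle convergence, in product-set form
  have hrect : ∀ S T : Set UI, MeasurableSet S → MeasurableSet T →
      Filter.Tendsto (fun n => ∫ z in S ×ˢ T, G (Φ n z)) Filter.atTop
        (nhds (∫ z in S ×ˢ T, F z)) := by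
    intro S T hS hT
    have h := hπ S T hS hT
    have e2 : ∫ z in S ×ˢ T, F z = ∫ x in S, ∫ y in T, U x y := INTfAux.rect_eq hFi S T
    rw [e2]
    refine Filter.Tendsto.congr (fun n => ?_) h
    exact (INTfAux.rect_eq (hFni n) S T).symm
  -- upgraded weak* convergence
  have hAll : ∀ {A : Set (UI × UI)}, MeasurableSet A →
      Filter.Tendsto (fun n => ∫ z in A, G (Φ n z)) Filter.atTop
        (nhds (∫ z in A, F z)) :=
    fun {A} hA => INTfAux.weakstar_all hFnm hFm habsn habs1 hrect hA
  -- Step A : comparison of the regularized parts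
  have hFnG : ∀ n, ∫ z, INTfAux.glim f (G (Φ n z)) = ∫ z, INTfAux.glim f (G z) :=
    fun n => INTfAux.integral_pm (π n) (fun z => INTfAux.glim f (G z))
  have hgkB : ∀ k, ∀ t ∈ Set.Icc (0:ℝ) 1,
      |INTfAux.gk f k t| ≤ C + (C + |INTfAux.slopeInf f (INTfAux.qseq 0)|) :=
    fun k t ht => INTfAux.gk_abs_le hf hC0 hC ht k
  have hglimB : ∀ t ∈ Set.Icc (0:ℝ) 1,
      |INTfAux.glim f t| ≤ C + (C + |INTfAux.slopeInf f (INTfAux.qseq 0)|) :=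
    fun t ht => INTfAux.glim_abs_le hf hC0 hC ht
  have hstepA : ∫ z, INTfAux.glim f (F z) ≤ ∫ z, INTfAux.glim f (G z) :=
    INTfAux.stepA hf hgkB hglimB hFm hGm hFr hGr hFnm hFnr hFnG hAll
  -- Step B : comparison of the level sets at 0
  have hA0m : MeasurableSet {z : UI × UI | F z = 0} := hFm (measurableSet_singleton 0)
  have hzero : ∫ z in {z : UI × UI | F z = 0}, F z = 0 := by
    rw [MeasureTheory.setIntegral_congr_fun (g := fun _ => (0:ℝ)) hA0m (fun z hz => hz)]
    simp
  have hconv0 : Filter.Tendsto (fun n => ∫ z in {z : UI × UI | F z = 0}, G (Φ n z))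
      Filter.atTop (nhds 0) := by
    have h := hAll hA0m
    rwa [hzero] at h
  have h0 : volume {z : UI × UI | F z = 0} ≤ volume {z : UI × UI | G z = 0} :=
    INTfAux.measure_le_zeroset hGm (fun z => (hGr z).1) (fun z => (hGr z).2) Φ hΦ hA0m hconv0
  -- Step B : comparison of the level sets at 1
  have hA1m : MeasurableSet {z : UI × UI | F z = 1} := hFm (measurableSet_singleton 1)
  have hone : ∫ z in {z : UI × UI | F z = 1}, F z
      = (volume {z : UI × UI | F z = 1}).toReal := by
    rw [MeasureTheory.setIntegral_congr_fun (g := fun _ => (1:ℝ)) hA1m (fun z hz => hz)]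
    simp
    rfl
  have hG'm : Measurable fun z : UI × UI => 1 - G z := measurable_const.sub hGm
  have hconv1 : Filter.Tendsto
      (fun n => ∫ z in {z : UI × UI | F z = 1}, (fun w : UI × UI => 1 - G w) (Φ n z))
      Filter.atTop (nhds 0) := by
    have hsub : ∀ n, ∫ z in {z : UI × UI | F z = 1}, (1 - G (Φ n z))
        = (volume {z : UI × UI | F z = 1}).toReal
          - ∫ z in {z : UI × UI | F z = 1}, G (Φ n z) := by
      intro n
      rw [MeasureTheory.integral_sub (integrableOn_const (measure_ne_top _ _) :
          IntegrableOn (fun _ => (1:ℝ)) {z : UI × UI | F z = 1} volume)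
        (hFni n).integrableOn, setIntegral_const]
      simp
      rfl
    have h2 := Filter.Tendsto.const_sub
      ((volume {z : UI × UI | F z = 1}).toReal) (hAll hA1m)
    rw [hone, sub_self] at h2
    exact Filter.Tendsto.congr (fun n => (hsub n).symm) h2
  have h1 : volume {z : UI × UI | F z = 1}
      ≤ volume {z : UI × UI | (fun w : UI × UI => 1 - G w) z = 0} :=
    INTfAux.measure_le_zeroset hG'm (fun z => by linarith [(hGr z).2])
      (fun z => by linarith [(hGr z).1]) Φ hΦ hA1m hconv1
  have hsetone : {z : UI × UI | (fun w : UI × UI => 1 - G w) z = 0}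
      = {z : UI × UI | G z = 1} := by
    ext z
    simp only [Set.mem_setOf_eq]
    constructor <;> intro h <;> linarith
  rw [hsetone] at h1
  -- decomposition of `INT_f` into regular part and endpoint jumps
  obtain ⟨hfFi, hdF⟩ := INTfAux.decomp hf hFm hFr
  obtain ⟨hfGi, hdG⟩ := INTfAux.decomp hf hGm hGr
  have eU : INTf f U = ∫ z, f (F z) := INTfAux.iter_eq hfFi
  have eW : INTf f W = ∫ z, f (G z) := INTfAux.iter_eq hfGi
  have hα : 0 ≤ f 0 - INTfAux.glim f 0 := by
    have := INTfAux.glim_le_f hf (Set.left_mem_Icc.2 zero_le_one); linarith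
  have hβ : 0 ≤ f 1 - INTfAux.glim f 1 := by
    have := INTfAux.glim_le_f hf (Set.right_mem_Icc.2 zero_le_one); linarith
  have ht0 : (volume {z : UI × UI | F z = 0}).toReal
      ≤ (volume {z : UI × UI | G z = 0}).toReal :=
    ENNReal.toReal_mono (measure_ne_top _ _) h0
  have ht1 : (volume {z : UI × UI | F z = 1}).toReal
      ≤ (volume {z : UI × UI | G z = 1}).toReal :=
    ENNReal.toReal_mono (measure_ne_top _ _) h1
  rw [eU, eW, hdF, hdG]
  have m0 := mul_le_mul_of_nonneg_left ht0 hα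
  have m1 := mul_le_mul_of_nonneg_left ht1 hβ
  linarith

end
end

section
/- Let f : [0,1] → ℝ be a strictly convex function (not assumed continuous). Then the graphon parameter INT_f defined by INT_f(W) = ∫_{[0,1]²} f(W(x,y)) dx dy is cut distance identifying: whenever U and W are graphons with U ≺ W, one has INT_f(U) < INT_f(W). -/
open MeasureTheory

attribute [local instance] Classical.propDecidable

noncomputable section

namespace DJH
open Filter Set

abbrev Om : Type := UI × UI

lemma vol_prod : (volume : Measure Om) = (volume : Measure UI).prod volume := rfl

lemma integrable_of_bound {F : Om → ℝ} (hm : Measurable F) (C : ℝ) (hb : ∀ p, |F p| ≤ C) :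
    Integrable F (volume : Measure Om) := by
  refine (integrable_const C).mono' hm.aestronglyMeasurable ?_
  exact .of_forall fun p => by simpa [Real.norm_eq_abs] using hb p

lemma abs_setIntegral_le {F : Om → ℝ} {C : ℝ} (hm : Measurable F) (hb : ∀ p, |F p| ≤ C)
    (A : Set Om) : |∫ p in A, F p| ≤ C * ((volume : Measure Om) A).toReal := by
  have := MeasureTheory.norm_setIntegral_le_of_norm_le_const (μ := (volume : Measure Om))
    (s := A) (f := F) (C := C) (measure_lt_top _ _) (fun x _ => by simpa [Real.norm_eq_abs] using hb x)
  simpa [Real.norm_eq_abs, measureReal_def] using this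

lemma iter_eq_set (V : UI → UI → ℝ) (hm : Measurable (Function.uncurry V)) (C : ℝ)
    (hb : ∀ p, |Function.uncurry V p| ≤ C)
    (S T : Set UI) :
    ∫ x in S, ∫ y in T, V x y = ∫ p in S ×ˢ T, Function.uncurry V p := by
  have hi : Integrable (Function.uncurry V) (volume : Measure Om) := integrable_of_bound hm C hb
  have h1 : ((volume : Measure UI).restrict S).prod ((volume : Measure UI).restrict T)
      = (volume : Measure Om).restrict (S ×ˢ T) := by
    rw [vol_prod, Measure.prod_restrict]
  have hi2 : Integrable (Function.uncurry V)
      (((volume : Measure UI).restrict S).prod ((volume : Measure UI).restrict T)) := by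
    rw [h1]; exact hi.restrict
  calc ∫ x in S, ∫ y in T, V x y
      = ∫ z : Om, Function.uncurry V z
        ∂(((volume : Measure UI).restrict S).prod ((volume : Measure UI).restrict T)) := by
        rw [MeasureTheory.integral_prod _ hi2]; rfl
    _ = ∫ p in S ×ˢ T, Function.uncurry V p := by rw [h1]

/-! ### MPB machinery -/

lemma _root_.MPB.m (φ : MPB) : Measurable φ.toFun := φ.measurePreserving.measurable

lemma _root_.MPB.emb (φ : MPB) : MeasurableEmbedding φ.toFun :=
  φ.m.measurableEmbedding φ.bijective.injective

def _root_.MPB.id' : MPB := ⟨id, Function.bijective_id, MeasurePreserving.id _⟩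

def _root_.MPB.comp (φ ψ : MPB) : MPB :=
  ⟨φ.toFun ∘ ψ.toFun, φ.bijective.comp ψ.bijective,
    φ.measurePreserving.comp ψ.measurePreserving⟩

def _root_.MPB.inv (φ : MPB) : MPB := by
  refine ⟨(Equiv.ofBijective φ.toFun φ.bijective).symm,
    (Equiv.ofBijective φ.toFun φ.bijective).symm.bijective, ?_, ?_⟩
  · -- measurable
    intro s hs
    have : (Equiv.ofBijective φ.toFun φ.bijective).symm ⁻¹' s = φ.toFun '' s := by
      ext x
      constructor
      · intro hx
        exact ⟨_, hx, Equiv.ofBijective_apply_symm_apply _ φ.bijective x⟩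
      · rintro ⟨y, hy, rfl⟩
        simpa [Equiv.ofBijective_symm_apply_apply] using hy
    rw [this]
    exact φ.emb.measurableSet_image.2 hs
  · -- map_eq
    ext s hs
    rw [Measure.map_apply (by
      intro t ht
      have : (Equiv.ofBijective φ.toFun φ.bijective).symm ⁻¹' t = φ.toFun '' t := by
        ext x
        constructor
        · intro hx
          exact ⟨_, hx, Equiv.ofBijective_apply_symm_apply _ φ.bijective x⟩
        · rintro ⟨y, hy, rfl⟩
          simpa [Equiv.ofBijective_symm_apply_apply] using hy
      rw [this]
      exact φ.emb.measurableSet_image.2 ht) hs]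
    have h2 : (Equiv.ofBijective φ.toFun φ.bijective).symm ⁻¹' s = φ.toFun '' s := by
      ext x
      constructor
      · intro hx
        exact ⟨_, hx, Equiv.ofBijective_apply_symm_apply _ φ.bijective x⟩
      · rintro ⟨y, hy, rfl⟩
        simpa [Equiv.ofBijective_symm_apply_apply] using hy
    rw [h2, ← φ.measurePreserving.measure_preimage
      ((φ.emb.measurableSet_image.2 hs).nullMeasurableSet),
      Function.Injective.preimage_image φ.bijective.injective]

lemma _root_.MPB.inv_right (φ : MPB) (x : UI) : φ.toFun (φ.inv.toFun x) = x :=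
  Equiv.ofBijective_apply_symm_apply _ φ.bijective x

def _root_.MPB.pmap (φ : MPB) : Om → Om := Prod.map φ.toFun φ.toFun

lemma _root_.MPB.pmap_pres (φ : MPB) :
    MeasurePreserving φ.pmap (volume : Measure Om) (volume : Measure Om) := by
  rw [vol_prod]
  exact φ.measurePreserving.prod φ.measurePreserving

lemma _root_.MPB.pmap_emb (φ : MPB) : MeasurableEmbedding φ.pmap := by
  have := MeasurableEmbedding.prodMap φ.emb φ.emb
  exact this

lemma _root_.MPB.integral_pmap (φ : MPB) (G : Om → ℝ) :
    ∫ p, G (φ.pmap p) = ∫ p, G p :=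
  φ.pmap_pres.integral_comp φ.pmap_emb G

lemma _root_.MPB.measure_pmap (φ : MPB) {A : Set Om} (hA : MeasurableSet A) :
    (volume : Measure Om) (φ.pmap ⁻¹' A) = volume A :=
  φ.pmap_pres.measure_preimage hA.nullMeasurableSet

lemma uncurry_vers (V : UI → UI → ℝ) (φ : MPB) :
    Function.uncurry (vers V φ.toFun) = Function.uncurry V ∘ φ.pmap := rfl

end DJH

namespace DJH
open Filter Set

lemma tendsto_setIntegral_of_rect {Fn : ℕ → Om → ℝ} {F : Om → ℝ}
    (hFm : ∀ n, Measurable (Fn n)) (hFb : ∀ n p, |Fn n p| ≤ 1)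
    (hGm : Measurable F) (hGb : ∀ p, |F p| ≤ 1)
    (h : ∀ S T : Set UI, MeasurableSet S → MeasurableSet T →
      Tendsto (fun n => ∫ p in S ×ˢ T, Fn n p) atTop (nhds (∫ p in S ×ˢ T, F p)))
    {E : Set Om} (hE : MeasurableSet E) :
    Tendsto (fun n => ∫ p in E, Fn n p) atTop (nhds (∫ p in E, F p)) := by
  have hiF : ∀ n, Integrable (Fn n) (volume : Measure Om) :=
    fun n => integrable_of_bound (hFm n) 1 (hFb n)
  have hiG : Integrable F (volume : Measure Om) := integrable_of_bound hGm 1 hGb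
  revert hE
  refine MeasurableSpace.induction_on_inter (C := fun E _ =>
      Tendsto (fun n => ∫ p in E, Fn n p) atTop (nhds (∫ p in E, F p)))
    (s := Set.image2 (· ×ˢ ·) {s : Set UI | MeasurableSet s} {t : Set UI | MeasurableSet t})
    generateFrom_prod.symm isPiSystem_prod ?_ ?_ ?_ ?_ E
  · simp [tendsto_const_nhds]
  · intro t ht
    obtain ⟨S, hS, T, hT, rfl⟩ := ht
    exact h S T hS hT
  · intro t ht hrec
    have huniv : Tendsto (fun n => ∫ p, Fn n p) atTop (nhds (∫ p, F p)) := by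
      have := h univ univ MeasurableSet.univ MeasurableSet.univ
      simpa [Set.univ_prod_univ] using this
    have heq : ∀ n, ∫ p in tᶜ, Fn n p = (∫ p, Fn n p) - ∫ p in t, Fn n p := by
      intro n
      have := MeasureTheory.integral_add_compl ht (hiF n)
      linarith
    have heqF : ∫ p in tᶜ, F p = (∫ p, F p) - ∫ p in t, F p := by
      have := MeasureTheory.integral_add_compl ht hiG
      linarith
    simp only [heq, heqF]
    exact huniv.sub hrec
  · intro s hdisj hmeas hrec
    rw [Metric.tendsto_atTop]
    intro ε hε
    -- tail bound
    set Ak : ℕ → Set Om := fun K => (⋃ i, s i) \ (⋃ i ∈ Finset.range K, s i) with hAk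
    have hAkm : ∀ K, MeasurableSet (Ak K) :=
      fun K => (MeasurableSet.iUnion hmeas).diff (Finset.measurableSet_biUnion _ fun i _ => hmeas i)
    have htail : Tendsto (fun K => (volume : Measure Om) (Ak K)) atTop (nhds 0) := by
      have h1 : Tendsto (fun K => (volume : Measure Om) (Ak K)) atTop
          (nhds ((volume : Measure Om) (⋂ K, Ak K))) := by
        apply MeasureTheory.tendsto_measure_iInter_atTop
          (fun K => (hAkm K).nullMeasurableSet)
        · intro a b hab
          apply Set.diff_subset_diff_right
          exact Set.biUnion_subset_biUnion_left (fun i hi =>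
            Finset.mem_range.2 (lt_of_lt_of_le (Finset.mem_range.1 hi) hab))
        · exact ⟨0, measure_ne_top _ _⟩
      have h2 : (⋂ K, Ak K) = ∅ := by
        ext p
        simp only [Set.mem_iInter, Set.mem_empty_iff_false, iff_false]
        intro hp
        obtain ⟨i, hi⟩ := Set.mem_iUnion.1 (hp 0).1
        exact (hp (i+1)).2 (Set.mem_biUnion (Finset.mem_range.2 (Nat.lt_succ_self i)) hi)
      rwa [h2, measure_empty] at h1
    have htailR : Tendsto (fun K => ((volume : Measure Om) (Ak K)).toReal) atTop (nhds 0) := by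
      have := (ENNReal.tendsto_toReal (by simp)).comp htail
      exact this
    obtain ⟨K, hK⟩ := (Metric.tendsto_atTop.1 htailR (ε/4) (by linarith)).imp
      (fun K hK => hK K le_rfl)
    have hKtail : ((volume : Measure Om) (Ak K)).toReal < ε/4 := by
      have := hK; rw [Real.dist_eq, sub_zero, abs_of_nonneg ENNReal.toReal_nonneg] at this
      exact this
    -- finite part converges
    have hfin : Tendsto (fun n => ∫ p in (⋃ i ∈ Finset.range K, s i), Fn n p) atTop
        (nhds (∫ p in (⋃ i ∈ Finset.range K, s i), F p)) := by
      have heq1 : ∀ n, ∫ p in (⋃ i ∈ Finset.range K, s i), Fn n p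
          = ∑ i ∈ Finset.range K, ∫ p in s i, Fn n p := fun n =>
        MeasureTheory.integral_biUnion_finset _ (fun i _ => hmeas i)
          (fun i _ j _ hij => hdisj hij) (fun i _ => (hiF n).integrableOn)
      have heq2 : ∫ p in (⋃ i ∈ Finset.range K, s i), F p
          = ∑ i ∈ Finset.range K, ∫ p in s i, F p :=
        MeasureTheory.integral_biUnion_finset _ (fun i _ => hmeas i)
          (fun i _ j _ hij => hdisj hij) (fun i _ => hiG.integrableOn)
      simp only [heq1, heq2]
      exact tendsto_finset_sum _ (fun i _ => hrec i)
    obtain ⟨N, hN⟩ := Metric.tendsto_atTop.1 hfin (ε/4) (by linarith)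
    refine ⟨N, fun n hn => ?_⟩
    have hsplit : ∀ (G : Om → ℝ), Integrable G (volume : Measure Om) →
        ∫ p in (⋃ i, s i), G p = (∫ p in (⋃ i ∈ Finset.range K, s i), G p) + ∫ p in Ak K, G p := by
      intro G hG
      rw [hAk]
      rw [← MeasureTheory.setIntegral_union]
      · congr 1
        rw [Set.union_diff_cancel]
        exact Set.iUnion₂_subset fun i _ => Set.subset_iUnion s i
      · exact Set.disjoint_sdiff_right.mono_left le_rfl
      · exact hAkm K
      · exact hG.integrableOn
      · exact hG.integrableOn
    have habs : ∀ (G : Om → ℝ), Measurable G → (∀ p, |G p| ≤ 1) →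
        |∫ p in Ak K, G p| ≤ ((volume : Measure Om) (Ak K)).toReal := by
      intro G hGm' hGb'
      simpa using abs_setIntegral_le hGm' hGb' (Ak K)
    rw [Real.dist_eq]
    have e1 := hsplit (Fn n) (hiF n)
    have e2 := hsplit F hiG
    have b1 := habs (Fn n) (hFm n) (hFb n)
    have b2 := habs F hGm hGb
    have b3 : |(∫ p in (⋃ i ∈ Finset.range K, s i), Fn n p)
        - ∫ p in (⋃ i ∈ Finset.range K, s i), F p| < ε/4 := by
      have := hN n hn; rwa [Real.dist_eq] at this
    calc |(∫ p in ⋃ i, s i, Fn n p) - ∫ p in ⋃ i, s i, F p|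
        = |((∫ p in (⋃ i ∈ Finset.range K, s i), Fn n p)
            - ∫ p in (⋃ i ∈ Finset.range K, s i), F p)
            + ((∫ p in Ak K, Fn n p) - ∫ p in Ak K, F p)| := by
          rw [e1, e2]; ring_nf
      _ ≤ |(∫ p in (⋃ i ∈ Finset.range K, s i), Fn n p)
            - ∫ p in (⋃ i ∈ Finset.range K, s i), F p|
            + (|∫ p in Ak K, Fn n p| + |∫ p in Ak K, F p|) := by
          refine (abs_add_le _ _).trans ?_
          gcongr
          exact abs_sub _ _
      _ < ε/4 + (ε/4 + ε/4) := by
          gcongr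
          · exact lt_of_le_of_lt b1 hKtail
          · exact lt_of_le_of_lt b2 hKtail
      _ ≤ ε := by linarith

end DJH

namespace DJH
open Filter Set Topology

/-! ### Endpoint limits of convex functions on [0,1] -/

def slopeSet (g : ℝ → ℝ) : Set ℝ :=
  {v | ∃ t, t ∈ Ioo (0:ℝ) (1/2) ∧ v = (g (1/2) - g t)/(1/2 - t)}

def epA (g : ℝ → ℝ) : ℝ := g (1/2) - (1/2) * sInf (slopeSet g)

section EP
variable {g : ℝ → ℝ} (hg : ConvexOn ℝ (Icc (0:ℝ) 1) g)

lemma mem_Icc01 {t : ℝ} (h : t ∈ Ioo (0:ℝ) (1/2)) : t ∈ Icc (0:ℝ) 1 :=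
  ⟨le_of_lt h.1, by linarith [h.2]⟩

include hg

-- slope from 1/2 is monotone in the other endpoint
lemma slope_half_mono {x y : ℝ} (hx : x ∈ Icc (0:ℝ) 1) (hy : y ∈ Icc (0:ℝ) 1)
    (hx2 : x ≠ 1/2) (hy2 : y ≠ 1/2) (hxy : x ≤ y) :
    (g (1/2) - g x)/(1/2 - x) ≤ (g (1/2) - g y)/(1/2 - y) := by
  have := hg.secant_mono (a := 1/2) (x := x) (y := y)
    (by constructor <;> norm_num) hx hy hx2 hy2 hxy
  have e1 : (g x - g (1/2))/(x - 1/2) = (g (1/2) - g x)/(1/2 - x) := by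
    rw [← neg_div_neg_eq]; ring_nf
  have e2 : (g y - g (1/2))/(y - 1/2) = (g (1/2) - g y)/(1/2 - y) := by
    rw [← neg_div_neg_eq]; ring_nf
  rwa [e1, e2] at this

lemma slopeSet_nonempty : (slopeSet g).Nonempty :=
  ⟨(g (1/2) - g (1/4))/(1/2 - 1/4), ⟨1/4, by constructor <;> norm_num, rfl⟩⟩

lemma slopeSet_bddBelow : BddBelow (slopeSet g) := by
  refine ⟨(g (1/2) - g 0)/(1/2 - 0), ?_⟩
  rintro v ⟨t, ht, rfl⟩
  exact slope_half_mono hg (by constructor <;> norm_num)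
    (mem_Icc01 ht) (by norm_num) (ne_of_lt ht.2) (le_of_lt ht.1)

lemma epA_le : epA g ≤ g 0 := by
  have h1 : (g (1/2) - g 0)/(1/2 - 0) ≤ sInf (slopeSet g) := by
    apply le_csInf (slopeSet_nonempty hg)
    rintro v ⟨t, ht, rfl⟩
    exact slope_half_mono hg (by constructor <;> norm_num)
      (mem_Icc01 ht) (by norm_num) (ne_of_lt ht.2) (le_of_lt ht.1)
  have : (g (1/2) - g 0)/(1/2 - 0) = 2*(g (1/2) - g 0) := by ring
  rw [this] at h1
  unfold epA; nlinarith

lemma epA_tendsto : Tendsto g (𝓝[>] (0:ℝ)) (𝓝 (epA g)) := by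
  rw [Metric.tendsto_nhdsWithin_nhds]
  intro ε hε
  set S := sInf (slopeSet g) with hS
  -- choose t₀ with slope close to S
  have h1 : S < S + ε/2 := by linarith
  obtain ⟨v, ⟨t₀, ht₀, rfl⟩, hv⟩ := exists_lt_of_csInf_lt (slopeSet_nonempty hg) h1
  set M := |S| + ε/2 + 1 with hM
  have hM0 : 0 < M := by positivity
  refine ⟨min t₀ (ε/(2*M)), lt_min ht₀.1 (by positivity), ?_⟩
  intro t ht hdist
  rw [Real.dist_eq, sub_zero] at hdist
  have ht0 : 0 < t := ht
  have habs : |t| = t := abs_of_pos ht0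
  have htt0 : t < t₀ := lt_of_lt_of_le (habs ▸ lt_of_lt_of_le hdist (min_le_left _ _)) le_rfl
  have htI : t ∈ Ioo (0:ℝ) (1/2) := ⟨ht0, lt_trans htt0 ht₀.2⟩
  -- slope bounds for t
  have hslo : S ≤ (g (1/2) - g t)/(1/2 - t) := csInf_le (slopeSet_bddBelow hg) ⟨t, htI, rfl⟩
  have hshi : (g (1/2) - g t)/(1/2 - t) ≤ (g (1/2) - g t₀)/(1/2 - t₀) :=
    slope_half_mono hg (mem_Icc01 htI) (mem_Icc01 ht₀) (ne_of_lt htI.2) (ne_of_lt ht₀.2)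
      (le_of_lt htt0)
  set s := (g (1/2) - g t)/(1/2 - t) with hs
  have hsM : |s| ≤ M := by
    rw [abs_le]
    have hn : -|S| ≤ S := neg_abs_le S
    have hp : S ≤ |S| := le_abs_self S
    constructor
    · rw [hM]; linarith
    · rw [hM]; linarith
  -- g t = g (1/2) - (1/2 - t) * s
  have hne : (1/2 - t) ≠ 0 := by intro h; rw [sub_eq_zero] at h; exact (ne_of_lt htI.2) h.symm
  have hgt : g t = g (1/2) - (1/2 - t) * s := by
    rw [hs, mul_comm, div_mul_cancel₀ _ hne]
    ring
  rw [Real.dist_eq, hgt]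
  have hsd : s - S < ε/2 := by
    have : (g (1/2) - g t₀)/(1/2 - t₀) < S + ε/2 := hv
    nlinarith [hshi]
  have hsd0 : 0 ≤ s - S := by linarith [hslo]
  have htM : t * M < ε/2 := by
    have : t < ε/(2*M) := habs ▸ lt_of_lt_of_le hdist (min_le_right _ _)
    calc t * M < (ε/(2*M)) * M := by
          apply mul_lt_mul_of_pos_right this hM0
      _ = ε/2 := by field_simp
  clear_value s S M
  have expand : g (1/2) - (1/2 - t)*s - epA g = -(1/2)*(s - S) + t*s := by
    rw [hS]; unfold epA; ring
  rw [expand]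
  calc |(-(1/2))*(s - S) + t*s| ≤ |(-(1/2))*(s-S)| + |t*s| := abs_add_le _ _
    _ = (1/2)*(s - S) + t*|s| := by
        rw [abs_mul, abs_mul, habs]
        congr 1
        · rw [abs_neg, abs_of_nonneg (by norm_num : (0:ℝ) ≤ 1/2), abs_of_nonneg hsd0]
    _ < ε/2 + ε/2 := by
        have h2 : t * |s| ≤ t * M := mul_le_mul_of_nonneg_left hsM (le_of_lt ht0)
        nlinarith [h2, htM, hsd, hε]
    _ = ε := by ring

end EP

end DJH

namespace DJH
open Filter Set Topology

section EP2
variable {g : ℝ → ℝ} (hg : ConvexOn ℝ (Icc (0:ℝ) 1) g)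

lemma flip_convex (hg : ConvexOn ℝ (Icc (0:ℝ) 1) g) :
    ConvexOn ℝ (Icc (0:ℝ) 1) (fun t => g (1 - t)) := by
  constructor
  · exact convex_Icc 0 1
  · intro x hx y hy a b ha hb hab
    have hx' : 1 - x ∈ Icc (0:ℝ) 1 := ⟨by linarith [hx.2], by linarith [hx.1]⟩
    have hy' : 1 - y ∈ Icc (0:ℝ) 1 := ⟨by linarith [hy.2], by linarith [hy.1]⟩
    have h := hg.2 hx' hy' ha hb hab
    simp only [smul_eq_mul] at h ⊢
    have e : (1:ℝ) - (a * x + b * y) = a * (1 - x) + b * (1 - y) := by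
      linear_combination (-1 : ℝ) * hab
    rw [e]
    exact h

def epB (g : ℝ → ℝ) : ℝ := epA (fun t => g (1 - t))

lemma epB_le (hg : ConvexOn ℝ (Icc (0:ℝ) 1) g) : epB g ≤ g 1 := by
  have := epA_le (flip_convex hg)
  simpa [epB] using this

lemma epB_tendsto (hg : ConvexOn ℝ (Icc (0:ℝ) 1) g) :
    Tendsto g (𝓝[<] (1:ℝ)) (𝓝 (epB g)) := by
  have h := epA_tendsto (flip_convex hg)
  have hmap : Tendsto (fun u : ℝ => 1 - u) (𝓝[<] (1:ℝ)) (𝓝[>] (0:ℝ)) := by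
    rw [tendsto_nhdsWithin_iff]
    constructor
    · have : Tendsto (fun u : ℝ => 1 - u) (𝓝 (1:ℝ)) (𝓝 (1 - 1)) :=
        (continuous_const.sub continuous_id).tendsto 1
      simpa using this.mono_left nhdsWithin_le_nhds
    · filter_upwards [self_mem_nhdsWithin] with u hu
      simp only [Set.mem_Iio] at hu
      simp only [Set.mem_Ioi]
      linarith
  have h2 := h.comp hmap
  refine h2.congr fun u => ?_
  simp [Function.comp]

def ftil (g : ℝ → ℝ) : ℝ → ℝ := fun t => if t ≤ 0 then epA g else if 1 ≤ t then epB g else g t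

lemma ftil_eq {t : ℝ} (h : t ∈ Ioo (0:ℝ) 1) : ftil g t = g t := by
  simp [ftil, not_le.2 h.1, not_le.2 h.2]

lemma ftil_zero : ftil g 0 = epA g := by simp [ftil]

lemma ftil_one : ftil g 1 = epB g := by norm_num [ftil]

lemma ftil_cont (hg : ConvexOn ℝ (Icc (0:ℝ) 1) g) : Continuous (ftil g) := by
  have hgIoo : ConvexOn ℝ (Ioo (0:ℝ) 1) g := hg.subset Ioo_subset_Icc_self (convex_Ioo 0 1)
  have hcont : ContinuousOn g (Ioo (0:ℝ) 1) := hgIoo.continuousOn isOpen_Ioo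
  rw [continuous_iff_continuousAt]
  intro x
  rcases lt_trichotomy x 0 with hx | hx | hx
  · -- x < 0 : locally constant
    have hev : ftil g =ᶠ[𝓝 x] fun _ => epA g := by
      filter_upwards [Iio_mem_nhds hx] with y hy
      simp only [Set.mem_Iio] at hy
      simp [ftil, le_of_lt hy]
    exact (continuousAt_congr hev).2 continuousAt_const
  · -- x = 0
    subst hx
    rw [continuousAt_iff_continuous_left_right]
    constructor
    · refine ContinuousWithinAt.congr (f := fun _ => epA g) continuousWithinAt_const ?_ ?_
      · intro y hy
        simp only [Set.mem_Iic] at hy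
        simp [ftil, hy]
      · simp [ftil]
    · rw [← continuousWithinAt_Ioi_iff_Ici]
      have : Tendsto (ftil g) (𝓝[>] (0:ℝ)) (𝓝 (epA g)) := by
        refine (epA_tendsto hg).congr' ?_
        filter_upwards [Ioo_mem_nhdsGT_of_mem (Set.mem_Ico.2 ⟨le_refl (0:ℝ), one_pos⟩)] with y hy
        exact (ftil_eq hy).symm
      simpa [ContinuousWithinAt, ftil_zero] using this
  rcases lt_trichotomy x 1 with hx1 | hx1 | hx1
  · -- 0 < x < 1
    have hev : ftil g =ᶠ[𝓝 x] g := by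
      filter_upwards [Ioo_mem_nhds hx hx1] with y hy
      exact ftil_eq hy
    exact (continuousAt_congr hev).2 (hcont.continuousAt (Ioo_mem_nhds hx hx1))
  · -- x = 1
    subst hx1
    rw [continuousAt_iff_continuous_left_right]
    constructor
    · rw [← continuousWithinAt_Iio_iff_Iic]
      have : Tendsto (ftil g) (𝓝[<] (1:ℝ)) (𝓝 (epB g)) := by
        refine (epB_tendsto hg).congr' ?_
        filter_upwards [Ioo_mem_nhdsLT_of_mem (Set.mem_Ioc.2 ⟨zero_lt_one, le_refl (1:ℝ)⟩)] with y hy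
        exact (ftil_eq hy).symm
      simpa [ContinuousWithinAt, ftil_one] using this
    · refine ContinuousWithinAt.congr (f := fun _ => epB g) continuousWithinAt_const ?_ ?_
      · intro y hy
        simp only [Set.mem_Ici] at hy
        have : ¬ (y ≤ 0) := by linarith
        simp [ftil, this, hy]
      · norm_num [ftil]
  · -- 1 < x
    have hev : ftil g =ᶠ[𝓝 x] fun _ => epB g := by
      filter_upwards [Ioi_mem_nhds hx1] with y hy
      simp only [Set.mem_Ioi] at hy
      have h1 : ¬ (y ≤ 0) := by linarith
      simp [ftil, h1, le_of_lt hy]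
    exact (continuousAt_congr hev).2 continuousAt_const

lemma ftil_convex (hg : ConvexOn ℝ (Icc (0:ℝ) 1) g) : ConvexOn ℝ (Icc (0:ℝ) 1) (ftil g) := by
  have hc := ftil_cont hg
  rw [convexOn_iff_slope_mono_adjacent]
  refine ⟨convex_Icc 0 1, ?_⟩
  -- step1 : interior points
  have step1 : ∀ x y z : ℝ, x ∈ Ioo (0:ℝ) 1 → y ∈ Ioo (0:ℝ) 1 → z ∈ Ioo (0:ℝ) 1 →
      x < y → y < z →
      (ftil g y - ftil g x)/(y - x) ≤ (ftil g z - ftil g y)/(z - y) := by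
    intro x y z hx hy hz hxy hyz
    rw [ftil_eq hx, ftil_eq hy, ftil_eq hz]
    exact hg.slope_mono_adjacent (Ioo_subset_Icc_self hx) (Ioo_subset_Icc_self hz) hxy hyz
  -- inner : allow z = 1
  have inner : ∀ x y z : ℝ, x ∈ Ioo (0:ℝ) 1 → y ∈ Ioo (0:ℝ) 1 → x < y → y < z → z ≤ 1 →
      (ftil g y - ftil g x)/(y - x) ≤ (ftil g z - ftil g y)/(z - y) := by
    intro x y z hx hy hxy hyz hz1
    rcases lt_or_eq_of_le hz1 with hz | hz
    · exact step1 x y z hx hy ⟨lt_trans hy.1 hyz, hz⟩ hxy hyz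
    · subst hz
      have hev : ∀ᶠ s in 𝓝[<] (1:ℝ), (ftil g y - ftil g x)/(y - x)
          ≤ (ftil g s - ftil g y)/(s - y) := by
        filter_upwards [Ioo_mem_nhdsLT_of_mem (Set.mem_Ioc.2 ⟨hy.2, le_refl (1:ℝ)⟩)] with s hs
        exact step1 x y s hx hy ⟨lt_trans hy.1 hs.1, hs.2⟩ hxy hs.1
      have hlim : Tendsto (fun s => (ftil g s - ftil g y)/(s - y)) (𝓝[<] (1:ℝ))
          (𝓝 ((ftil g 1 - ftil g y)/(1 - y))) := by
        apply Tendsto.div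
        · exact ((hc.tendsto 1).mono_left nhdsWithin_le_nhds).sub tendsto_const_nhds
        · exact (tendsto_id.mono_left nhdsWithin_le_nhds).sub tendsto_const_nhds
        · intro h0
          rw [sub_eq_zero] at h0
          exact (ne_of_lt hy.2) h0.symm
      exact ge_of_tendsto hlim hev
  -- now allow x = 0
  intro x y z hx hz hxy hyz
  have hy : y ∈ Ioo (0:ℝ) 1 := ⟨lt_of_le_of_lt hx.1 hxy, lt_of_lt_of_le hyz hz.2⟩
  rcases lt_or_eq_of_le hx.1 with hx0 | hx0
  · exact inner x y z ⟨hx0, lt_of_lt_of_le (lt_trans hxy hyz) hz.2⟩ hy hxy hyz hz.2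
  · -- x = 0
    have hx0' : x = 0 := hx0.symm
    subst hx0'
    have hev : ∀ᶠ t in 𝓝[>] (0:ℝ), (ftil g y - ftil g t)/(y - t)
        ≤ (ftil g z - ftil g y)/(z - y) := by
      filter_upwards [Ioo_mem_nhdsGT_of_mem (Set.mem_Ico.2 ⟨le_refl (0:ℝ), hy.1⟩)] with t ht
      exact inner t y z ⟨ht.1, lt_trans ht.2 hy.2⟩ hy ht.2 hyz hz.2
    have hlim : Tendsto (fun t => (ftil g y - ftil g t)/(y - t)) (𝓝[>] (0:ℝ))
        (𝓝 ((ftil g y - ftil g 0)/(y - 0))) := by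
      apply Tendsto.div
      · exact tendsto_const_nhds.sub ((hc.tendsto 0).mono_left nhdsWithin_le_nhds)
      · exact tendsto_const_nhds.sub (tendsto_id.mono_left nhdsWithin_le_nhds)
      · intro h0
        rw [sub_zero] at h0
        exact (ne_of_gt hy.1) h0
    exact le_of_tendsto hlim hev

end EP2

end DJH

namespace DJH
open Filter Set Topology

lemma ftil_midgap {f : ℝ → ℝ} (hf : StrictConvexOn ℝ (Icc (0:ℝ) 1) f)
    {a ε : ℝ} (ha : 0 ≤ a) (hε : 0 < ε) (hae : a + ε ≤ 1) :
    0 < ftil f a + ftil f (a + ε) - 2 * ftil f (a + ε/2) := by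
  have hg := hf.convexOn
  set u := a + ε/4 with hu
  set v := a + 3*ε/4 with hv
  have huI : u ∈ Ioo (0:ℝ) 1 := ⟨by rw [hu]; linarith, by rw [hu]; linarith⟩
  have hvI : v ∈ Ioo (0:ℝ) 1 := ⟨by rw [hv]; linarith, by rw [hv]; linarith⟩
  have hmI : a + ε/2 ∈ Ioo (0:ℝ) 1 := ⟨by linarith, by linarith⟩
  have h1 : ftil f (a + ε/2) < (ftil f u + ftil f v)/2 := by
    rw [ftil_eq hmI, ftil_eq huI, ftil_eq hvI]
    have := hf.2 (Ioo_subset_Icc_self huI) (Ioo_subset_Icc_self hvI)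
      (by rw [hu, hv]; intro h; nlinarith [hε] : u ≠ v)
      (by norm_num : (0:ℝ) < 1/2) (by norm_num : (0:ℝ) < 1/2) (by norm_num)
    simp only [smul_eq_mul] at this
    have e : (1:ℝ)/2 * u + 1/2 * v = a + ε/2 := by rw [hu, hv]; ring
    rw [e] at this
    linarith
  have haI : a ∈ Icc (0:ℝ) 1 := ⟨ha, by linarith⟩
  have haeI : a + ε ∈ Icc (0:ℝ) 1 := ⟨by linarith, hae⟩
  have hmI' : a + ε/2 ∈ Icc (0:ℝ) 1 := Ioo_subset_Icc_self hmI
  have hcvx := ftil_convex hg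
  have h2 : ftil f u ≤ (ftil f a + ftil f (a + ε/2))/2 := by
    have := hcvx.2 haI hmI' (by norm_num : (0:ℝ) < 1/2).le (by norm_num : (0:ℝ) < 1/2).le
      (by norm_num)
    simp only [smul_eq_mul] at this
    have e : (1:ℝ)/2 * a + 1/2 * (a + ε/2) = u := by rw [hu]; ring
    rw [e] at this
    linarith
  have h3 : ftil f v ≤ (ftil f (a + ε/2) + ftil f (a + ε))/2 := by
    have := hcvx.2 hmI' haeI (by norm_num : (0:ℝ) < 1/2).le (by norm_num : (0:ℝ) < 1/2).le
      (by norm_num)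
    simp only [smul_eq_mul] at this
    have e : (1:ℝ)/2 * (a + ε/2) + 1/2 * (a + ε) = v := by rw [hv]; ring
    rw [e] at this
    linarith
  linarith

lemma f_decomp {f : ℝ → ℝ} (hf : ConvexOn ℝ (Icc (0:ℝ) 1) f) {t : ℝ} (ht : t ∈ Icc (0:ℝ) 1) :
    f t = ftil f t + (if t = 0 then f 0 - epA f else 0) + (if t = 1 then f 1 - epB f else 0) := by
  rcases eq_or_lt_of_le ht.1 with h0 | h0
  · have : t = 0 := h0.symm
    subst this
    rw [ftil_zero]
    norm_num
  rcases eq_or_lt_of_le ht.2 with h1 | h1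
  · subst h1
    rw [ftil_one]
    norm_num
  · rw [ftil_eq ⟨h0, h1⟩, if_neg (ne_of_gt h0), if_neg (ne_of_lt h1)]
    ring

/-! ### subgradient slopes -/

def dsl (g : ℝ → ℝ) (a : ℝ) : ℝ := sSup {v | ∃ x, 0 ≤ x ∧ x < a ∧ v = (g a - g x)/(a - x)}

section DSL
variable {g : ℝ → ℝ} (hg : ConvexOn ℝ (Icc (0:ℝ) 1) g)

lemma dslset_nonempty {a : ℝ} (ha : 0 < a) :
    {v | ∃ x, 0 ≤ x ∧ x < a ∧ v = (g a - g x)/(a - x)}.Nonempty :=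
  ⟨(g a - g 0)/(a - 0), 0, le_refl 0, ha, rfl⟩

include hg

lemma dslset_bdd {a : ℝ} (ha : a ∈ Ioo (0:ℝ) 1) :
    BddAbove {v | ∃ x, 0 ≤ x ∧ x < a ∧ v = (g a - g x)/(a - x)} := by
  refine ⟨(g 1 - g a)/(1 - a), ?_⟩
  rintro v ⟨x, hx0, hxa, rfl⟩
  exact hg.slope_mono_adjacent ⟨hx0, by linarith [ha.2]⟩ ⟨by linarith [hx0], le_refl 1⟩
    hxa ha.2

lemma dsl_ge {a x : ℝ} (ha : a ∈ Ioo (0:ℝ) 1) (hx0 : 0 ≤ x) (hxa : x < a) :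
    (g a - g x)/(a - x) ≤ dsl g a :=
  le_csSup (dslset_bdd hg ha) ⟨x, hx0, hxa, rfl⟩

lemma dsl_le {a c : ℝ} (ha : a ∈ Ioo (0:ℝ) 1) (hac : a < c) (hc : c ≤ 1) :
    dsl g a ≤ (g c - g a)/(c - a) := by
  apply csSup_le (dslset_nonempty ha.1)
  rintro v ⟨x, hx0, hxa, rfl⟩
  exact hg.slope_mono_adjacent ⟨hx0, by linarith⟩ ⟨by linarith, hc⟩ hxa hac

lemma dsl_subgrad {a u : ℝ} (ha : a ∈ Ioo (0:ℝ) 1) (hu : u ∈ Icc (0:ℝ) 1) :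
    g a + dsl g a * (u - a) ≤ g u := by
  rcases lt_trichotomy u a with h | h | h
  · have h1 := dsl_ge hg ha hu.1 h
    have h2 : 0 < a - u := by linarith
    rw [div_le_iff₀ h2] at h1
    have e : dsl g a * (u - a) = -(dsl g a * (a - u)) := by ring
    linarith
  · subst h; simp
  · have h1 := dsl_le hg ha h hu.2
    have h2 : 0 < u - a := by linarith
    rw [le_div_iff₀ h2] at h1
    linarith

lemma gap_uniform (hgc : Continuous g)
    (hmid : ∀ a ε : ℝ, 0 ≤ a → 0 < ε → a + ε ≤ 1 → 0 < g a + g (a+ε) - 2*g (a+ε/2))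
    {ε : ℝ} (hε : 0 < ε) (hε1 : ε ≤ 1) :
    ∃ c > 0, ∀ a t : ℝ, a ∈ Ioo (0:ℝ) 1 → t ∈ Icc (0:ℝ) 1 → ε ≤ |t - a| →
      c ≤ g t - (g a + dsl g a * (t - a)) := by
  set φ : ℝ → ℝ := fun a => g a + g (a+ε) - 2*g (a+ε/2) with hφ
  have hφc : ContinuousOn φ (Icc 0 (1-ε)) := by
    apply Continuous.continuousOn
    fun_prop
  obtain ⟨astar, hastar, hmin⟩ := (isCompact_Icc (a := (0:ℝ)) (b := 1-ε)).exists_isMinOn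
    ⟨0, by constructor <;> linarith⟩ hφc
  set c := φ astar with hc
  have hcpos : 0 < c := hmid astar ε hastar.1 hε (by linarith [hastar.2])
  refine ⟨c, hcpos, ?_⟩
  intro a t ha ht hsep
  have hminle : ∀ b, b ∈ Icc (0:ℝ) (1-ε) → c ≤ φ b := fun b hb => hmin hb
  rcases abs_cases (t - a) with ⟨he, hpos⟩ | ⟨he, hneg⟩
  · -- t ≥ a + ε
    have htae : a + ε ≤ t := by rw [he] at hsep; linarith
    have haI : a ∈ Icc (0:ℝ) (1-ε) := ⟨ha.1.le, by linarith [ht.2]⟩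
    have hta : (0:ℝ) < t - a := by linarith
    set s1 := (g (a+ε) - g a)/ε with hs1
    set s2 := (g (a+ε/2) - g a)/(ε/2) with hs2
    have k1 : s1 * (t - a) ≤ g t - g a := by
      have hsec : s1 ≤ (g t - g a)/(t - a) := by
        rcases eq_or_lt_of_le htae with heq | hlt
        · subst heq
          rw [hs1, show a + ε - a = ε from by ring]
        · have := hg.secant_mono (a := a) (x := a+ε) (y := t)
            ⟨ha.1.le, by linarith [ht.2]⟩ ⟨by linarith [ha.1], by linarith [ht.2]⟩ ht
            (by intro h; nlinarith) (by intro h; nlinarith) (le_of_lt hlt)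
          rw [hs1]
          have e : a + ε - a = ε := by ring
          rwa [e] at this
      rw [le_div_iff₀ hta] at hsec
      exact hsec
    have k2 : dsl g a ≤ s2 := by
      have := dsl_le hg ha (by linarith : a < a + ε/2) (by linarith [haI.2])
      have e : a + ε/2 - a = ε/2 := by ring
      rwa [e] at this
    have k3 : dsl g a * (t - a) ≤ s2 * (t - a) :=
      mul_le_mul_of_nonneg_right k2 hta.le
    have q0 : s2 ≤ s1 := by
      have := hg.secant_mono (a := a) (x := a+ε/2) (y := a+ε)
        ⟨ha.1.le, by linarith [haI.2]⟩ ⟨by linarith [ha.1], by linarith [haI.2]⟩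
        ⟨by linarith [ha.1], by linarith [haI.2]⟩
        (by intro h; nlinarith) (by intro h; nlinarith) (by linarith)
      have e1 : a + ε/2 - a = ε/2 := by ring
      have e2 : a + ε - a = ε := by ring
      rw [e1, e2] at this
      rw [hs1, hs2]
      exact this
    have k4 : (s1 - s2)*ε ≤ (s1 - s2)*(t - a) :=
      mul_le_mul_of_nonneg_left (by linarith) (by linarith)
    have k5 : (s1 - s2)*ε = φ a := by
      have e0 : φ a = g a + g (a+ε) - 2*g (a+ε/2) := by simp only [hφ]
      rw [e0, hs1, hs2]
      field_simp
      ring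
    have k4' : (s1 - s2)*(t-a) = s1*(t-a) - s2*(t-a) := by ring
    have hca : c ≤ φ a := hminle a haI
    linarith [k1, k3, k4, k4', k5, hca]
  · -- t ≤ a - ε
    have htae : t ≤ a - ε := by rw [he] at hsep; linarith
    have haI : a - ε ∈ Icc (0:ℝ) (1-ε) := ⟨by linarith [ht.1], by linarith [ha.2]⟩
    have hta : t - a < 0 := by linarith
    set s1 := (g a - g (a-ε))/ε with hs1
    set s2 := (g a - g (a-ε/2))/(ε/2) with hs2
    have k1 : s1 * (t - a) ≤ g t - g a := by
      have haC : a ∈ Icc (0:ℝ) 1 := ⟨ha.1.le, ha.2.le⟩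
      have hsec : (g t - g a)/(t - a) ≤ s1 := by
        rcases eq_or_lt_of_le htae with heq | hlt
        · subst heq
          rw [hs1, show a - ε - a = -ε from by ring, div_neg]
          exact le_of_eq (by ring)
        · have := hg.secant_mono (a := a) (x := t) (y := a - ε)
            haC ht ⟨by linarith [ht.1], by linarith [ha.2]⟩
            (by intro h; nlinarith) (by intro h; nlinarith) (le_of_lt hlt)
          have e : (g (a-ε) - g a)/(a - ε - a) = s1 := by
            rw [hs1, show a - ε - a = -ε from by ring, div_neg]
            ring
          rwa [e] at this
      rw [div_le_iff_of_neg hta] at hsec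
      linarith [hsec]
    have k2 : s2 ≤ dsl g a := by
      have := dsl_ge hg ha (by linarith [haI.1] : (0:ℝ) ≤ a - ε/2) (by linarith : a - ε/2 < a)
      have e : a - (a - ε/2) = ε/2 := by ring
      rw [e] at this
      rwa [hs2]
    have k3 : dsl g a * (t - a) ≤ s2 * (t - a) := by
      have := mul_le_mul_of_nonpos_right k2 hta.le
      linarith [this]
    have q0 : s1 ≤ s2 := by
      have := hg.secant_mono (a := a) (x := a - ε) (y := a - ε/2)
        ⟨ha.1.le, ha.2.le⟩ ⟨haI.1, by linarith [ha.2]⟩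
        ⟨by linarith [haI.1], by linarith [ha.2]⟩
        (by intro h; nlinarith) (by intro h; nlinarith) (by linarith)
      have e1 : (g (a-ε) - g a)/(a - ε - a) = s1 := by
        rw [hs1]; have e2 : a - ε - a = -ε := by ring
        rw [e2, div_neg]; ring
      have e3 : (g (a-ε/2) - g a)/(a - ε/2 - a) = s2 := by
        rw [hs2]; have e4 : a - ε/2 - a = -(ε/2) := by ring
        rw [e4, div_neg]; ring
      rw [e1, e3] at this
      exact this
    have k4 : (s2 - s1)*ε ≤ (s2 - s1)*(a - t) :=
      mul_le_mul_of_nonneg_left (by linarith) (by linarith)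
    have k5 : (s2 - s1)*ε = φ (a - ε) := by
      have e0 : φ (a - ε) = g (a-ε) + g (a-ε+ε) - 2*g (a-ε+ε/2) := by simp only [hφ]
      rw [e0, show a-ε+ε = a from by ring, show a-ε+ε/2 = a-ε/2 from by ring, hs1, hs2]
      field_simp
      ring
    have k4' : (s2 - s1)*(a - t) = s1*(t-a) - s2*(t-a) := by ring
    have hca : c ≤ φ (a - ε) := hminle _ haI
    linarith [k1, k3, k4, k4', k5, hca]

lemma cell_err {δ ε a t : ℝ} (hδ : 0 < δ)
    (huc : ∀ x y : ℝ, x ∈ Icc (0:ℝ) 1 → y ∈ Icc (0:ℝ) 1 → |x - y| ≤ δ → |g x - g y| ≤ ε)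
    (ha1 : δ ≤ a) (ha2 : a ≤ 1 - δ) (ht : t ∈ Icc (0:ℝ) 1) (hta : |t - a| ≤ δ) :
    g t - (g a + dsl g a * (t - a)) ≤ 2*ε := by
  have haI : a ∈ Ioo (0:ℝ) 1 := ⟨by linarith, by linarith⟩
  have haIc : a ∈ Icc (0:ℝ) 1 := ⟨by linarith, by linarith⟩
  have part1 : g t - g a ≤ ε := (abs_le.1 (huc t a ht haIc hta)).2
  have part2 : -(dsl g a * (t - a)) ≤ ε := by
    rcases le_or_gt a t with hat | hat
    · -- t ≥ a : use lower bound on dsl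
      set s := (g a - g (a - δ))/δ with hs
      have hges : s ≤ dsl g a := by
        have := dsl_ge hg haI (by linarith : (0:ℝ) ≤ a - δ) (by linarith)
        have e : a - (a - δ) = δ := by ring
        rw [e] at this
        rwa [hs]
      have h1 : -(dsl g a * (t - a)) ≤ -(s * (t - a)) := by
        have := mul_le_mul_of_nonneg_right hges (by linarith : (0:ℝ) ≤ t - a)
        linarith
      have h2 : -(s * (t - a)) ≤ |s| * δ := by
        calc -(s * (t-a)) ≤ |s * (t-a)| := neg_le_abs _
          _ = |s| * |t - a| := abs_mul _ _
          _ ≤ |s| * δ := by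
              apply mul_le_mul_of_nonneg_left _ (abs_nonneg s)
              rw [abs_of_nonneg (by linarith : (0:ℝ) ≤ t - a)] at hta ⊢
              exact hta
      have h3 : |s| * δ = |g a - g (a - δ)| := by
        rw [hs, abs_div, abs_of_pos hδ, div_mul_cancel₀ _ (ne_of_gt hδ)]
      have h4 : |g a - g (a - δ)| ≤ ε :=
        huc a (a - δ) haIc ⟨by linarith, by linarith⟩ (by rw [show a - (a - δ) = δ by ring,
          abs_of_pos hδ])
      linarith
    · -- t < a : use upper bound on dsl
      set s := (g (a + δ) - g a)/δ with hs
      have hles : dsl g a ≤ s := by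
        have := dsl_le hg haI (by linarith : a < a + δ) (by linarith)
        have e : a + δ - a = δ := by ring
        rw [e] at this
        rwa [hs]
      have h1 : -(dsl g a * (t - a)) ≤ -(s * (t - a)) := by
        have := mul_le_mul_of_nonpos_right hles (by linarith : t - a ≤ 0)
        linarith
      have h2 : -(s * (t - a)) ≤ |s| * δ := by
        calc -(s * (t-a)) ≤ |s * (t-a)| := neg_le_abs _
          _ = |s| * |t - a| := abs_mul _ _
          _ ≤ |s| * δ := mul_le_mul_of_nonneg_left hta (abs_nonneg s)
      have h3 : |s| * δ = |g (a + δ) - g a| := by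
        rw [hs, abs_div, abs_of_pos hδ, div_mul_cancel₀ _ (ne_of_gt hδ)]
      have h4 : |g (a + δ) - g a| ≤ ε :=
        huc (a + δ) a ⟨by linarith, by linarith⟩ haIc (by rw [show a + δ - a = δ by ring,
          abs_of_pos hδ])
      linarith
  linarith

end DSL

end DJH


namespace DJH
open Filter Set Topology

def cellR (k j : ℕ) : Set ℝ :=
  if j + 1 = k then Ici ((j:ℝ)/k) else Ico ((j:ℝ)/k) (((j:ℝ)+1)/k)

def anch (k j : ℕ) : ℝ := if j = 0 then 1/(k:ℝ) else (j:ℝ)/k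

lemma cellR_meas (k j : ℕ) : MeasurableSet (cellR k j) := by
  unfold cellR
  split
  · exact measurableSet_Ici
  · exact measurableSet_Ico

lemma cast_pred {k : ℕ} (hk : 2 ≤ k) : ((k - 1 : ℕ) : ℝ) = (k:ℝ) - 1 := by
  push_cast [Nat.cast_sub (by omega : (1:ℕ) ≤ k)]
  ring

lemma cell_exists {k : ℕ} (hk : 2 ≤ k) {t : ℝ} (ht : t ∈ Icc (0:ℝ) 1) :
    ∃ j, j < k ∧ t ∈ cellR k j := by
  have hk0 : (0:ℝ) < k := by exact_mod_cast (by omega : 0 < k)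
  have ht0 : 0 ≤ t * k := mul_nonneg ht.1 hk0.le
  rcases le_or_gt ((k:ℝ) - 1) (t * k) with hbig | hsmall
  · refine ⟨k - 1, Nat.sub_lt (by omega) one_pos, ?_⟩
    unfold cellR
    rw [if_pos (by omega), Set.mem_Ici, div_le_iff₀ hk0, cast_pred hk]
    linarith
  · set j := Nat.floor (t * k) with hj
    have hjle : (j:ℝ) ≤ t * k := Nat.floor_le ht0
    have hjlt : t * k < (j:ℝ) + 1 := Nat.lt_floor_add_one _
    have hjk' : j + 1 < k := by
      by_contra hcon
      have h1 : (k:ℝ) - 1 ≤ (j:ℝ) := by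
        have h2 : k - 1 ≤ j := by omega
        have h3 := (Nat.cast_le (α := ℝ)).2 h2
        rwa [cast_pred hk] at h3
      linarith
    refine ⟨j, by omega, ?_⟩
    unfold cellR
    rw [if_neg (by omega), Set.mem_Ico, div_le_iff₀ hk0, lt_div_iff₀ hk0]
    exact ⟨hjle, hjlt⟩

lemma cell_disj {k i j : ℕ} (hik : i < k) (hjk : j < k) (hij : i ≠ j) :
    Disjoint (cellR k i) (cellR k j) := by
  have hk0 : (0:ℝ) < k := by exact_mod_cast (by omega : 0 < k)
  have main : ∀ i j : ℕ, i < k → j < k → i < j → Disjoint (cellR k i) (cellR k j) := by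
    intro i j hik hjk hij
    rw [Set.disjoint_left]
    intro t hti htj
    have hiIco : t < ((i:ℝ)+1)/k := by
      have he : cellR k i = Ico ((i:ℝ)/k) (((i:ℝ)+1)/k) := by
        unfold cellR; rw [if_neg (by omega)]
      rw [he] at hti
      exact hti.2
    have htj' : ((j:ℝ))/k ≤ t := by
      unfold cellR at htj
      split at htj
      · exact htj
      · exact htj.1
    have hcast : ((i:ℝ)+1) ≤ (j:ℝ) := by exact_mod_cast hij
    have hdiv : ((i:ℝ)+1)/k ≤ ((j:ℝ))/k := by gcongr
    linarith
  rcases lt_or_gt_of_ne hij with h | h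
  · exact main i j hik hjk h
  · exact (main j i hjk hik h).symm

lemma anch_mem {k j : ℕ} (hk : 2 ≤ k) (hj : j < k) :
    1/(k:ℝ) ≤ anch k j ∧ anch k j ≤ 1 - 1/(k:ℝ) := by
  have hk0 : (0:ℝ) < k := by exact_mod_cast (by omega : 0 < k)
  have hk2 : (2:ℝ) ≤ k := by exact_mod_cast hk
  have h2k : (2:ℝ)/k ≤ 1 := by rw [div_le_one hk0]; exact hk2
  have e2 : (2:ℝ)/k = 2*(1/k) := by ring
  unfold anch
  split
  · exact ⟨le_refl _, by linarith⟩
  · rename_i hj0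
    have hj1 : (1:ℝ) ≤ (j:ℝ) := by exact_mod_cast Nat.one_le_iff_ne_zero.2 hj0
    constructor
    · gcongr
    · have hjk1 : ((j:ℝ)+1)/k ≤ 1 := by
        rw [div_le_one hk0]
        exact_mod_cast (by omega : j + 1 ≤ k)
      have e3 : ((j:ℝ)+1)/k = (j:ℝ)/k + 1/k := by ring
      linarith

lemma anch_Ioo {k j : ℕ} (hk : 2 ≤ k) (hj : j < k) : anch k j ∈ Ioo (0:ℝ) 1 := by
  have h := anch_mem hk hj
  have hk0 : (0:ℝ) < k := by exact_mod_cast (by omega : 0 < k)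
  have h1k : 0 < 1/(k:ℝ) := by positivity
  exact ⟨lt_of_lt_of_le h1k h.1, by linarith [h.2]⟩

lemma cell_anch_close {k j : ℕ} (hk : 2 ≤ k) (hj : j < k) {t : ℝ}
    (htc : t ∈ cellR k j) (ht : t ∈ Icc (0:ℝ) 1) : |t - anch k j| ≤ 1/(k:ℝ) := by
  have hk0 : (0:ℝ) < k := by exact_mod_cast (by omega : 0 < k)
  have h1k : 0 < 1/(k:ℝ) := by positivity
  rcases eq_or_ne j 0 with hj0 | hj0
  · subst hj0
    have hne : ¬ (0 + 1 = k) := by omega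
    unfold cellR at htc
    rw [if_neg hne] at htc
    have h2 : t < ((0:ℝ)+1)/k := by exact_mod_cast htc.2
    have h2' : t < 1/(k:ℝ) := by norm_num at h2; rwa [inv_eq_one_div] at h2
    unfold anch
    rw [if_pos rfl]
    rw [abs_le]
    exact ⟨by linarith [ht.1], by linarith⟩
  · unfold anch
    rw [if_neg hj0]
    unfold cellR at htc
    split at htc
    · rename_i hjk1
      have hjr : ((j:ℝ)+1) = (k:ℝ) := by exact_mod_cast hjk1
      have hdk : ((j:ℝ)+1)/k = 1 := by rw [hjr, div_self hk0.ne']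
      have e3 : ((j:ℝ)+1)/k = (j:ℝ)/k + 1/k := by ring
      rw [Set.mem_Ici] at htc
      rw [abs_le]
      constructor
      · linarith
      · linarith [ht.2]
    · rw [Set.mem_Ico] at htc
      have e3 : ((j:ℝ)+1)/k = (j:ℝ)/k + 1/k := by ring
      rw [abs_le]
      exact ⟨by linarith [htc.1], by linarith [htc.2]⟩

end DJH


namespace DJH
open Filter Set Topology

def SLine (g : ℝ → ℝ) (k : ℕ) (G : Om → ℝ) (H : Om → ℝ) : ℝ :=
  ∑ j ∈ Finset.range k, ∫ p in G ⁻¹' (cellR k j),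
    (g (anch k j) + dsl g (anch k j) * (H p - anch k j))

section Main

variable {g : ℝ → ℝ} {G : Om → ℝ} {Fn : ℕ → Om → ℝ}

lemma cont_bound (hgc : Continuous g) : ∃ M, ∀ t ∈ Icc (0:ℝ) 1, |g t| ≤ M := by
  obtain ⟨M, hM⟩ := (isCompact_Icc (a := (0:ℝ)) (b := 1)).exists_bound_of_continuousOn
    hgc.continuousOn
  exact ⟨M, fun t ht => by simpa [Real.norm_eq_abs] using hM t ht⟩

lemma comp_integrable (hgc : Continuous g) {H : Om → ℝ} (hHm : Measurable H)
    (hH : ∀ p, H p ∈ Icc (0:ℝ) 1) : Integrable (fun p => g (H p)) (volume : Measure Om) := by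
  obtain ⟨M, hM⟩ := cont_bound hgc
  exact integrable_of_bound (hgc.measurable.comp hHm) M (fun p => hM _ (hH p))

lemma line_integrable (c1 c2 a : ℝ) {H : Om → ℝ} (hHm : Measurable H)
    (hH : ∀ p, H p ∈ Icc (0:ℝ) 1) :
    Integrable (fun p => c1 + c2 * (H p - a)) (volume : Measure Om) := by
  apply integrable_of_bound (by fun_prop) (|c1| + |c2| * (1 + |a|))
  intro p
  have h1 : |H p - a| ≤ 1 + |a| := by
    have := abs_sub_abs_le_abs_sub (H p) a
    have h2 : |H p| ≤ 1 := by
      rw [abs_le]; exact ⟨by linarith [(hH p).1], (hH p).2⟩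
    calc |H p - a| ≤ |H p| + |a| := abs_sub _ _
      _ ≤ 1 + |a| := by linarith
  calc |c1 + c2 * (H p - a)| ≤ |c1| + |c2 * (H p - a)| := abs_add_le _ _
    _ = |c1| + |c2| * |H p - a| := by rw [abs_mul]
    _ ≤ |c1| + |c2| * (1 + |a|) := by
        have := mul_le_mul_of_nonneg_left h1 (abs_nonneg c2)
        linarith

/-- pointwise: the indicator-sum of supporting lines is below `g ∘ H`. -/
lemma lines_le_pointwise (hg : ConvexOn ℝ (Icc (0:ℝ) 1) g) {k : ℕ} (hk : 2 ≤ k)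
    (hG : ∀ p, G p ∈ Icc (0:ℝ) 1) {H : Om → ℝ} (hH : ∀ p, H p ∈ Icc (0:ℝ) 1) (p : Om) :
    ∑ j ∈ Finset.range k, Set.indicator (G ⁻¹' (cellR k j))
      (fun q => g (anch k j) + dsl g (anch k j) * (H q - anch k j)) p ≤ g (H p) := by
  obtain ⟨j₀, hj₀k, hmem⟩ := cell_exists hk (hG p)
  have hsum : ∑ j ∈ Finset.range k, Set.indicator (G ⁻¹' (cellR k j))
      (fun q => g (anch k j) + dsl g (anch k j) * (H q - anch k j)) p
      = g (anch k j₀) + dsl g (anch k j₀) * (H p - anch k j₀) := by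
    rw [Finset.sum_eq_single_of_mem j₀ (Finset.mem_range.2 hj₀k)]
    · exact Set.indicator_of_mem (show p ∈ G ⁻¹' cellR k j₀ from hmem)
        (fun q => g (anch k j₀) + dsl g (anch k j₀) * (H q - anch k j₀))
    · intro b hb hne
      apply Set.indicator_of_notMem
      intro hmem'
      exact Set.disjoint_left.1 (cell_disj (Finset.mem_range.1 hb) hj₀k hne) hmem' hmem
  rw [hsum]
  exact dsl_subgrad hg (anch_Ioo hk hj₀k) (hH p)

lemma SLine_le (hg : ConvexOn ℝ (Icc (0:ℝ) 1) g) (hgc : Continuous g) {k : ℕ} (hk : 2 ≤ k)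
    (hGm : Measurable G) (hG : ∀ p, G p ∈ Icc (0:ℝ) 1)
    {H : Om → ℝ} (hHm : Measurable H) (hH : ∀ p, H p ∈ Icc (0:ℝ) 1) :
    SLine g k G H ≤ ∫ p, g (H p) := by
  have hCm : ∀ j, MeasurableSet (G ⁻¹' (cellR k j)) := fun j => hGm (cellR_meas k j)
  have hint : ∀ j, Integrable (fun p => g (anch k j) + dsl g (anch k j) * (H p - anch k j))
      (volume : Measure Om) := fun j => line_integrable _ _ _ hHm hH
  have lhs_eq : SLine g k G H = ∫ p, ∑ j ∈ Finset.range k, Set.indicator (G ⁻¹' (cellR k j))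
      (fun q => g (anch k j) + dsl g (anch k j) * (H q - anch k j)) p := by
    rw [MeasureTheory.integral_finset_sum]
    · unfold SLine
      congr 1
      ext j
      rw [MeasureTheory.integral_indicator (hCm j)]
    · exact fun j _ => (hint j).indicator (hCm j)
  rw [lhs_eq]
  apply MeasureTheory.integral_mono
    (integrable_finset_sum _ (fun j _ => (hint j).indicator (hCm j)))
    (comp_integrable hgc hHm hH)
  exact lines_le_pointwise hg hk hG hH

lemma setint_affine {A : Set Om} (hA : MeasurableSet A) {H : Om → ℝ} (hHm : Measurable H)
    (hH : ∀ p, H p ∈ Icc (0:ℝ) 1) (c1 c2 a : ℝ) :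
    ∫ p in A, (c1 + c2 * (H p - a))
      = (c1 - c2*a) * ((volume : Measure Om) A).toReal + c2 * ∫ p in A, H p := by
  have hHi : Integrable H (volume : Measure Om) := by
    apply integrable_of_bound hHm 1
    intro p
    rw [abs_le]; exact ⟨by linarith [(hH p).1], (hH p).2⟩
  have e : (fun p => c1 + c2 * (H p - a)) = fun p => (c1 - c2*a) + c2 * H p := by
    funext p; ring
  rw [e, MeasureTheory.integral_add (integrable_const _) ((hHi.restrict).const_mul c2),
    MeasureTheory.setIntegral_const, MeasureTheory.integral_const_mul]
  simp [smul_eq_mul, measureReal_def]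
  ring

lemma SLine_tendsto {k : ℕ}
    (hGm : Measurable G) (hG : ∀ p, G p ∈ Icc (0:ℝ) 1)
    (hFm : ∀ n, Measurable (Fn n)) (hF : ∀ n p, Fn n p ∈ Icc (0:ℝ) 1)
    (hsets : ∀ E : Set Om, MeasurableSet E →
      Tendsto (fun n => ∫ p in E, Fn n p) atTop (nhds (∫ p in E, G p))) :
    Tendsto (fun n => SLine g k G (Fn n)) atTop (nhds (SLine g k G G)) := by
  have hCm : ∀ j, MeasurableSet (G ⁻¹' (cellR k j)) := fun j => hGm (cellR_meas k j)
  unfold SLine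
  apply tendsto_finset_sum
  intro j _
  have eq1 : ∀ n, ∫ p in G ⁻¹' (cellR k j),
      (g (anch k j) + dsl g (anch k j) * (Fn n p - anch k j))
      = (g (anch k j) - dsl g (anch k j) * anch k j)
          * ((volume : Measure Om) (G ⁻¹' (cellR k j))).toReal
        + dsl g (anch k j) * ∫ p in G ⁻¹' (cellR k j), Fn n p :=
    fun n => setint_affine (hCm j) (hFm n) (hF n) _ _ _
  have eq2 : ∫ p in G ⁻¹' (cellR k j), (g (anch k j) + dsl g (anch k j) * (G p - anch k j))
      = (g (anch k j) - dsl g (anch k j) * anch k j)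
          * ((volume : Measure Om) (G ⁻¹' (cellR k j))).toReal
        + dsl g (anch k j) * ∫ p in G ⁻¹' (cellR k j), G p :=
    setint_affine (hCm j) hGm hG _ _ _
  simp only [eq1, eq2]
  exact tendsto_const_nhds.add ((hsets _ (hCm j)).const_mul _)

lemma sum_cells_vol {k : ℕ} (hk : 2 ≤ k) (hGm : Measurable G)
    (hG : ∀ p, G p ∈ Icc (0:ℝ) 1) :
    ∑ j ∈ Finset.range k, ((volume : Measure Om) (G ⁻¹' (cellR k j))).toReal = 1 := by
  have hCm : ∀ j, MeasurableSet (G ⁻¹' (cellR k j)) := fun j => hGm (cellR_meas k j)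
  have huniv : (⋃ j ∈ Finset.range k, G ⁻¹' (cellR k j)) = (univ : Set Om) := by
    rw [Set.eq_univ_iff_forall]
    intro p
    obtain ⟨j, hjk, hmem⟩ := cell_exists hk (hG p)
    exact Set.mem_biUnion (Finset.mem_range.2 hjk) hmem
  have hdisj : (↑(Finset.range k) : Set ℕ).Pairwise
      (Function.onFun Disjoint fun j => G ⁻¹' (cellR k j)) := by
    intro i hi j hj hij
    exact Disjoint.preimage G (cell_disj (Finset.mem_range.1 hi) (Finset.mem_range.1 hj) hij)
  have := MeasureTheory.measure_biUnion_finset (μ := (volume : Measure Om)) hdisj (fun j _ => hCm j)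
  rw [huniv] at this
  have h1 : ((volume : Measure Om) (univ : Set Om)) = 1 := measure_univ
  rw [h1] at this
  have h2 : (∑ j ∈ Finset.range k, (volume : Measure Om) (G ⁻¹' (cellR k j))).toReal
      = ∑ j ∈ Finset.range k, ((volume : Measure Om) (G ⁻¹' (cellR k j))).toReal :=
    ENNReal.toReal_sum (fun j _ => measure_ne_top _ _)
  rw [← h2, ← this]
  simp

lemma SLine_err (hg : ConvexOn ℝ (Icc (0:ℝ) 1) g) (hgc : Continuous g) {k : ℕ} (hk : 2 ≤ k)
    {ε : ℝ}
    (huc : ∀ x y : ℝ, x ∈ Icc (0:ℝ) 1 → y ∈ Icc (0:ℝ) 1 → |x - y| ≤ 1/(k:ℝ) → |g x - g y| ≤ ε)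
    (hGm : Measurable G) (hG : ∀ p, G p ∈ Icc (0:ℝ) 1) :
    ∫ p, g (G p) ≤ SLine g k G G + 2*ε := by
  have hk0 : (0:ℝ) < k := by exact_mod_cast (by omega : 0 < k)
  have hCm : ∀ j, MeasurableSet (G ⁻¹' (cellR k j)) := fun j => hGm (cellR_meas k j)
  have huniv : (⋃ j ∈ Finset.range k, G ⁻¹' (cellR k j)) = (univ : Set Om) := by
    rw [Set.eq_univ_iff_forall]
    intro p
    obtain ⟨j, hjk, hmem⟩ := cell_exists hk (hG p)
    exact Set.mem_biUnion (Finset.mem_range.2 hjk) hmem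
  have hdisj : (↑(Finset.range k) : Set ℕ).Pairwise
      (Function.onFun Disjoint fun j => G ⁻¹' (cellR k j)) := by
    intro i hi j hj hij
    exact Disjoint.preimage G (cell_disj (Finset.mem_range.1 hi) (Finset.mem_range.1 hj) hij)
  have hgG : Integrable (fun p => g (G p)) (volume : Measure Om) := comp_integrable hgc hGm hG
  have split : ∫ p, g (G p) = ∑ j ∈ Finset.range k, ∫ p in G ⁻¹' (cellR k j), g (G p) := by
    rw [← MeasureTheory.integral_biUnion_finset (Finset.range k) (fun j _ => hCm j) hdisj
      (fun j _ => hgG.integrableOn), huniv]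
    simp
  rw [split]
  have cellwise : ∀ j ∈ Finset.range k, ∫ p in G ⁻¹' (cellR k j), g (G p)
      ≤ (∫ p in G ⁻¹' (cellR k j),
          (g (anch k j) + dsl g (anch k j) * (G p - anch k j)))
        + 2*ε * ((volume : Measure Om) (G ⁻¹' (cellR k j))).toReal := by
    intro j hj
    have hjk := Finset.mem_range.1 hj
    have hanch := anch_mem hk hjk
    have key : ∀ p ∈ G ⁻¹' (cellR k j), g (G p)
        ≤ (g (anch k j) + dsl g (anch k j) * (G p - anch k j)) + 2*ε := by
      intro p hp
      have hclose := cell_anch_close hk hjk hp (hG p)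
      have := cell_err hg (by positivity : (0:ℝ) < 1/(k:ℝ)) huc hanch.1 hanch.2 (hG p) hclose
      linarith
    have h2 : ∫ p in G ⁻¹' (cellR k j), g (G p)
        ≤ ∫ p in G ⁻¹' (cellR k j),
            ((g (anch k j) + dsl g (anch k j) * (G p - anch k j)) + 2*ε) := by
      apply MeasureTheory.setIntegral_mono_on hgG.integrableOn
        (((line_integrable _ _ _ hGm hG).add (integrable_const _)).integrableOn) (hCm j) key
    have h3 : ∫ p in G ⁻¹' (cellR k j),
        ((g (anch k j) + dsl g (anch k j) * (G p - anch k j)) + 2*ε)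
        = (∫ p in G ⁻¹' (cellR k j), (g (anch k j) + dsl g (anch k j) * (G p - anch k j)))
          + 2*ε * ((volume : Measure Om) (G ⁻¹' (cellR k j))).toReal := by
      rw [MeasureTheory.integral_add ((line_integrable _ _ _ hGm hG).restrict)
        (integrable_const _), MeasureTheory.setIntegral_const]
      simp [smul_eq_mul, measureReal_def]
      ring
    linarith [h2, h3 ▸ h2]
  calc ∑ j ∈ Finset.range k, ∫ p in G ⁻¹' (cellR k j), g (G p)
      ≤ ∑ j ∈ Finset.range k, ((∫ p in G ⁻¹' (cellR k j),
          (g (anch k j) + dsl g (anch k j) * (G p - anch k j)))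
        + 2*ε * ((volume : Measure Om) (G ⁻¹' (cellR k j))).toReal) :=
        Finset.sum_le_sum cellwise
    _ = SLine g k G G + 2*ε * ∑ j ∈ Finset.range k,
          ((volume : Measure Om) (G ⁻¹' (cellR k j))).toReal := by
        rw [Finset.sum_add_distrib, ← Finset.mul_sum]
        rfl
    _ = SLine g k G G + 2*ε := by rw [sum_cells_vol hk hGm hG]; ring

end Main

end DJH


namespace DJH
open Filter Set Topology

section Main2

variable {g : ℝ → ℝ} {G : Om → ℝ} {Fn : ℕ → Om → ℝ}

/-- choice of a fine partition parameter. -/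
lemma exists_k (hgc : Continuous g) {ε β : ℝ} (hε : 0 < ε) (hβ : 0 < β) :
    ∃ k : ℕ, 2 ≤ k ∧ 1/(k:ℝ) ≤ β ∧
      (∀ x y : ℝ, x ∈ Icc (0:ℝ) 1 → y ∈ Icc (0:ℝ) 1 → |x - y| ≤ 1/(k:ℝ) → |g x - g y| ≤ ε) := by
  have huc := (isCompact_Icc (a := (0:ℝ)) (b := 1)).uniformContinuousOn_of_continuous
    hgc.continuousOn
  rw [Metric.uniformContinuousOn_iff] at huc
  obtain ⟨δ, hδ, hucd⟩ := huc ε hε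
  obtain ⟨k, hk⟩ := exists_nat_gt (max 2 (max (2/δ) (2/β)))
  have hk2 : (2:ℝ) < k := lt_of_le_of_lt (le_max_left _ _) hk
  have hkδ : 2/δ < k := lt_of_le_of_lt (le_trans (le_max_left _ _) (le_max_right _ _)) hk
  have hkβ : 2/β < k := lt_of_le_of_lt (le_trans (le_max_right _ _) (le_max_right _ _)) hk
  have hk0 : (0:ℝ) < k := by linarith
  refine ⟨k, by exact_mod_cast hk2.le, ?_, ?_⟩
  · rw [div_le_iff₀ hk0]
    rw [div_lt_iff₀ hβ] at hkβ
    nlinarith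
  · intro x y hx hy hxy
    have h1k : 1/(k:ℝ) < δ := by
      rw [div_lt_iff₀ hk0]
      rw [div_lt_iff₀ hδ] at hkδ
      nlinarith
    have := hucd x hx y hy (by rw [Real.dist_eq]; linarith)
    rw [Real.dist_eq] at this
    linarith

lemma stepA (hg : ConvexOn ℝ (Icc (0:ℝ) 1) g) (hgc : Continuous g)
    (hGm : Measurable G) (hG : ∀ p, G p ∈ Icc (0:ℝ) 1)
    (hFm : ∀ n, Measurable (Fn n)) (hF : ∀ n p, Fn n p ∈ Icc (0:ℝ) 1)
    (hsets : ∀ E : Set Om, MeasurableSet E →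
      Tendsto (fun n => ∫ p in E, Fn n p) atTop (nhds (∫ p in E, G p)))
    {IW : ℝ} (hIW : ∀ n, ∫ p, g (Fn n p) = IW) :
    ∫ p, g (G p) ≤ IW := by
  apply le_of_forall_pos_le_add
  intro ε hε
  obtain ⟨k, hk2, -, huc⟩ := exists_k hgc (half_pos hε) one_pos
  have h1 : ∫ p, g (G p) ≤ SLine g k G G + 2*(ε/2) := SLine_err hg hgc hk2 huc hGm hG
  have h2 : SLine g k G G ≤ IW := by
    apply le_of_tendsto (SLine_tendsto hGm hG hFm hF hsets)
    filter_upwards with n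
    rw [← hIW n]
    exact SLine_le hg hgc hk2 hGm hG (hFm n) (hF n)
  linarith

lemma dev_bound (hg : ConvexOn ℝ (Icc (0:ℝ) 1) g) {k : ℕ} (hk : 2 ≤ k)
    (hGm : Measurable G) (hG : ∀ p, G p ∈ Icc (0:ℝ) 1)
    {H : Om → ℝ} (hHm : Measurable H) (hH : ∀ p, H p ∈ Icc (0:ℝ) 1)
    {ε' c : ℝ} (hε' : 0 < ε') (h1k : 1/(k:ℝ) ≤ ε'/2) (hc : 0 < c)
    (hgap : ∀ a t : ℝ, a ∈ Ioo (0:ℝ) 1 → t ∈ Icc (0:ℝ) 1 → ε'/2 ≤ |t - a| →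
      c ≤ g t - (g a + dsl g a * (t - a)))
    (hgc : Continuous g) :
    c * ((volume : Measure Om) {p | ε' ≤ |H p - G p|}).toReal
      ≤ (∫ p, g (H p)) - SLine g k G H := by
  have hCm : ∀ j, MeasurableSet (G ⁻¹' (cellR k j)) := fun j => hGm (cellR_meas k j)
  set D : Set Om := {p | ε' ≤ |H p - G p|} with hD
  have hDm : MeasurableSet D := by
    apply measurableSet_le measurable_const
    exact (hHm.sub hGm).abs
  have hint : ∀ j, Integrable (fun p => g (anch k j) + dsl g (anch k j) * (H p - anch k j))
      (volume : Measure Om) := fun j => line_integrable _ _ _ hHm hH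
  -- pointwise bound
  have hpt : ∀ p, Set.indicator D (fun _ => c) p
      + ∑ j ∈ Finset.range k, Set.indicator (G ⁻¹' (cellR k j))
        (fun q => g (anch k j) + dsl g (anch k j) * (H q - anch k j)) p ≤ g (H p) := by
    intro p
    obtain ⟨j₀, hj₀k, hmem⟩ := cell_exists hk (hG p)
    have hsum : ∑ j ∈ Finset.range k, Set.indicator (G ⁻¹' (cellR k j))
        (fun q => g (anch k j) + dsl g (anch k j) * (H q - anch k j)) p
        = g (anch k j₀) + dsl g (anch k j₀) * (H p - anch k j₀) := by
      rw [Finset.sum_eq_single_of_mem j₀ (Finset.mem_range.2 hj₀k)]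
      · exact Set.indicator_of_mem (show p ∈ G ⁻¹' cellR k j₀ from hmem)
          (fun q => g (anch k j₀) + dsl g (anch k j₀) * (H q - anch k j₀))
      · intro b hb hne
        apply Set.indicator_of_notMem
        intro hmem'
        exact Set.disjoint_left.1 (cell_disj (Finset.mem_range.1 hb) hj₀k hne) hmem' hmem
    rw [hsum]
    by_cases hpD : p ∈ D
    · rw [Set.indicator_of_mem hpD]
      have hclose := cell_anch_close hk hj₀k hmem (hG p)
      have hfar : ε'/2 ≤ |H p - anch k j₀| := by
        have htri : |H p - G p| ≤ |H p - anch k j₀| + |anch k j₀ - G p| := abs_sub_le _ _ _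
        have h2 : |anch k j₀ - G p| ≤ 1/(k:ℝ) := by rwa [abs_sub_comm]
        have h3 : ε' ≤ |H p - G p| := hpD
        linarith
      have := hgap (anch k j₀) (H p) (anch_Ioo hk hj₀k) (hH p) hfar
      linarith
    · rw [Set.indicator_of_notMem hpD]
      have := dsl_subgrad hg (anch_Ioo hk hj₀k) (hH p)
      linarith
  -- integrate
  have hlhs : ∫ p, (Set.indicator D (fun _ => c) p
      + ∑ j ∈ Finset.range k, Set.indicator (G ⁻¹' (cellR k j))
        (fun q => g (anch k j) + dsl g (anch k j) * (H q - anch k j)) p)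
      = c * ((volume : Measure Om) D).toReal + SLine g k G H := by
    rw [MeasureTheory.integral_add ((integrable_const c).indicator hDm)
      (integrable_finset_sum _ (fun j _ => (hint j).indicator (hCm j)))]
    congr 1
    · rw [MeasureTheory.integral_indicator hDm, MeasureTheory.setIntegral_const]
      simp [smul_eq_mul, measureReal_def]
      ring
    · rw [MeasureTheory.integral_finset_sum _ (fun j _ => (hint j).indicator (hCm j))]
      unfold SLine
      congr 1
      ext j
      rw [MeasureTheory.integral_indicator (hCm j)]
  have hmono := MeasureTheory.integral_mono
    (((integrable_const c).indicator hDm).add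
      (integrable_finset_sum _ (fun j _ => (hint j).indicator (hCm j))))
    (comp_integrable hgc hHm hH) hpt
  simp only [Pi.add_apply] at hmono
  rw [hlhs] at hmono
  linarith
  
lemma stepB (hg : ConvexOn ℝ (Icc (0:ℝ) 1) g) (hgc : Continuous g)
    (hmid : ∀ a ε : ℝ, 0 ≤ a → 0 < ε → a + ε ≤ 1 → 0 < g a + g (a+ε) - 2*g (a+ε/2))
    (hGm : Measurable G) (hG : ∀ p, G p ∈ Icc (0:ℝ) 1)
    (hFm : ∀ n, Measurable (Fn n)) (hF : ∀ n p, Fn n p ∈ Icc (0:ℝ) 1)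
    (hsets : ∀ E : Set Om, MeasurableSet E →
      Tendsto (fun n => ∫ p in E, Fn n p) atTop (nhds (∫ p in E, G p)))
    {IW : ℝ} (hIW : ∀ n, ∫ p, g (Fn n p) = IW) (heq : ∫ p, g (G p) = IW)
    {η : ℝ} (hη : 0 < η) :
    ∀ᶠ n in atTop, ∫ p, |Fn n p - G p| < η := by
  set ε' : ℝ := min (η/4) 1 with hε'def
  have hε'pos : 0 < ε' := lt_min (by linarith) one_pos
  have hε'le : ε' ≤ η/4 := min_le_left _ _
  have hε'1 : ε' ≤ 1 := min_le_right _ _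
  obtain ⟨c, hc, hgap⟩ := gap_uniform hg hgc hmid (half_pos hε'pos) (by linarith)
  set εuc : ℝ := c * (η/4) / 3 with hεuc
  have hεucpos : 0 < εuc := by positivity
  obtain ⟨k, hk2, h1k, huc⟩ := exists_k hgc hεucpos (half_pos hε'pos)
  -- limit of T n
  have hTlim : Tendsto (fun n => IW - SLine g k G (Fn n)) atTop
      (nhds (IW - SLine g k G G)) :=
    tendsto_const_nhds.sub (SLine_tendsto hGm hG hFm hF hsets)
  have hSG : IW - SLine g k G G ≤ 2*εuc := by
    have := SLine_err hg hgc hk2 huc hGm hG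
    linarith [heq ▸ this]
  have hev : ∀ᶠ n in atTop, IW - SLine g k G (Fn n) < 3*εuc := by
    have := hTlim.eventually_lt_const (show IW - SLine g k G G < 3*εuc by linarith)
    exact this
  filter_upwards [hev] with n hn
  -- deviation set bound
  have hdev := dev_bound hg hk2 hGm hG (hFm n) (hF n) hε'pos h1k hc hgap hgc
  rw [hIW n] at hdev
  have hvol : ((volume : Measure Om) {p | ε' ≤ |Fn n p - G p|}).toReal ≤ η/4 := by
    have h2 : c * ((volume : Measure Om) {p | ε' ≤ |Fn n p - G p|}).toReal < 3*εuc := by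
      linarith
    rw [hεuc] at h2
    have h3 : 3 * (c * (η/4) / 3) = c * (η/4) := by ring
    rw [h3] at h2
    have := (mul_lt_mul_iff_right₀ hc).1 h2
    linarith
  -- L¹ bound
  set D : Set Om := {p | ε' ≤ |Fn n p - G p|} with hD
  have hDm : MeasurableSet D := by
    apply measurableSet_le measurable_const
    exact ((hFm n).sub hGm).abs
  have hdiffm : Measurable (fun p => |Fn n p - G p|) := ((hFm n).sub hGm).abs
  have hdiffb : ∀ p, |(fun p => |Fn n p - G p|) p| ≤ 1 := by
    intro p
    rw [abs_abs, abs_le]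
    constructor
    · linarith [(hF n p).1, (hG p).2]
    · linarith [(hF n p).2, (hG p).1]
  have hdiffi : Integrable (fun p => |Fn n p - G p|) (volume : Measure Om) :=
    integrable_of_bound hdiffm 1 hdiffb
  have hsplit : ∫ p, |Fn n p - G p|
      = (∫ p in D, |Fn n p - G p|) + ∫ p in Dᶜ, |Fn n p - G p| :=
    (MeasureTheory.integral_add_compl hDm hdiffi).symm
  have hb1 : ∫ p in D, |Fn n p - G p| ≤ ((volume : Measure Om) D).toReal := by
    have := MeasureTheory.setIntegral_mono_on hdiffi.integrableOn
      (integrable_const (1:ℝ)).integrableOn hDm (fun p _ => hdiffb p |> fun h => by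
        rw [abs_abs] at h; exact h)
    rw [MeasureTheory.setIntegral_const] at this
    simpa [smul_eq_mul, measureReal_def] using this
  have hb2 : ∫ p in Dᶜ, |Fn n p - G p| ≤ ε' := by
    have hstep : ∫ p in Dᶜ, |Fn n p - G p| ≤ ∫ p in Dᶜ, ε' := by
      apply MeasureTheory.setIntegral_mono_on hdiffi.integrableOn
        (integrable_const ε').integrableOn hDm.compl
      intro p hp
      rw [hD] at hp
      simp only [Set.mem_compl_iff, Set.mem_setOf_eq, not_le] at hp
      exact hp.le
    have hconst : ∫ p in Dᶜ, ε' = ((volume : Measure Om) Dᶜ).toReal * ε' := by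
      rw [MeasureTheory.setIntegral_const]; simp [smul_eq_mul, measureReal_def]
    have hle1 : ((volume : Measure Om) Dᶜ).toReal ≤ 1 := by
      have h1 : (volume : Measure Om) Dᶜ ≤ 1 := by
        rw [← (measure_univ : (volume : Measure Om) univ = 1)]
        exact measure_mono (subset_univ _)
      have := ENNReal.toReal_mono (by simp) h1
      simpa using this
    rw [hconst] at hstep
    nlinarith [hstep, hε'pos]
  calc ∫ p, |Fn n p - G p| = (∫ p in D, |Fn n p - G p|) + ∫ p in Dᶜ, |Fn n p - G p| := hsplit
    _ ≤ ((volume : Measure Om) D).toReal + ε' := by gcongr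
    _ ≤ η/4 + η/4 := add_le_add hvol hε'le
    _ < η := by linarith

end Main2

end DJH


namespace DJH
open Filter Set Topology

section Level

variable {G : Om → ℝ} {Fn : ℕ → Om → ℝ}

lemma level_le
    (hGm : Measurable G) (hG : ∀ p, G p ∈ Icc (0:ℝ) 1)
    (hFm : ∀ n, Measurable (Fn n)) (hF : ∀ n p, Fn n p ∈ Icc (0:ℝ) 1)
    (hsets : ∀ E : Set Om, MeasurableSet E →
      Tendsto (fun n => ∫ p in E, Fn n p) atTop (nhds (∫ p in E, G p)))
    {Fw : Om → ℝ} (hwm : Measurable Fw) (hw : ∀ p, Fw p ∈ Icc (0:ℝ) 1)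
    (hdist : ∀ n (ε : ℝ),
      (volume : Measure Om) {p | Fn n p < ε} = (volume : Measure Om) {p | Fw p < ε}) :
    (volume : Measure Om) {p | G p = 0} ≤ (volume : Measure Om) {p | Fw p = 0} := by
  set A0 : Set Om := {p | G p = 0} with hA0def
  have hA0m : MeasurableSet A0 := hGm (measurableSet_singleton 0)
  have hGzero : ∫ p in A0, G p = 0 := by
    rw [MeasureTheory.setIntegral_congr_fun hA0m (g := fun _ => (0:ℝ)) (fun p hp => hp)]
    simp
  have h0 : Tendsto (fun n => ∫ p in A0, Fn n p) atTop (nhds 0) := by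
    have := hsets A0 hA0m
    rwa [hGzero] at this
  -- claim for each positive ε
  have claim : ∀ ε : ℝ, 0 < ε →
      (volume : Measure Om) A0 ≤ (volume : Measure Om) {p | Fw p < ε} := by
    intro ε hε
    rw [← ENNReal.toReal_le_toReal (measure_ne_top _ _) (measure_ne_top _ _)]
    apply le_of_forall_pos_le_add
    intro σ hσ
    obtain ⟨n, hn⟩ := (h0.eventually_lt_const (by positivity : (0:ℝ) < σ * ε)).exists
    set B : Set Om := A0 ∩ {p | ε ≤ Fn n p} with hBdef
    have hBm : MeasurableSet B :=
      hA0m.inter (measurableSet_le measurable_const (hFm n))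
    have hFni : Integrable (Fn n) (volume : Measure Om) := by
      apply integrable_of_bound (hFm n) 1
      intro p; rw [abs_le]; exact ⟨by linarith [(hF n p).1], (hF n p).2⟩
    have hmarkov : ε * ((volume : Measure Om) B).toReal ≤ ∫ p in A0, Fn n p := by
      have h1 : ε * ((volume : Measure Om) B).toReal ≤ ∫ p in B, Fn n p :=
        MeasureTheory.setIntegral_ge_of_const_le_real hBm (measure_ne_top _ _)
          (fun p hp => hp.2) hFni.integrableOn
      have h2 : ∫ p in B, Fn n p ≤ ∫ p in A0, Fn n p := by
        apply MeasureTheory.setIntegral_mono_set hFni.integrableOn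
        · exact Filter.Eventually.of_forall (fun p => (hF n p).1)
        · exact HasSubset.Subset.eventuallyLE Set.inter_subset_left
      linarith
    have hBsmall : ((volume : Measure Om) B).toReal < σ := by
      by_contra hcon
      push_neg at hcon
      have : ε * σ ≤ ε * ((volume : Measure Om) B).toReal :=
        mul_le_mul_of_nonneg_left hcon hε.le
      nlinarith [hmarkov, hn]
    have hsub : A0 ⊆ B ∪ {p | Fn n p < ε} := by
      intro p hp
      by_cases hc : ε ≤ Fn n p
      · exact Or.inl ⟨hp, hc⟩
      · exact Or.inr (by simpa using not_le.1 hc)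
    have hmeas : (volume : Measure Om) A0
        ≤ (volume : Measure Om) B + (volume : Measure Om) {p | Fn n p < ε} :=
      le_trans (measure_mono hsub) (measure_union_le _ _)
    have hr : ((volume : Measure Om) A0).toReal
        ≤ ((volume : Measure Om) B).toReal
          + ((volume : Measure Om) {p | Fn n p < ε}).toReal := by
      have := ENNReal.toReal_mono (by
        exact ENNReal.add_ne_top.2 ⟨measure_ne_top _ _, measure_ne_top _ _⟩) hmeas
      rwa [ENNReal.toReal_add (measure_ne_top _ _) (measure_ne_top _ _)] at this
    rw [hdist n ε] at hr
    linarith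
  -- pass to the limit in ε
  have hiInter : (⋂ m : ℕ, {p : Om | Fw p < 1/((m:ℝ)+1)}) = {p : Om | Fw p = 0} := by
    ext p
    simp only [Set.mem_iInter, Set.mem_setOf_eq]
    constructor
    · intro hp
      by_contra hne
      have hpos : 0 < Fw p := lt_of_le_of_ne (hw p).1 (Ne.symm hne)
      obtain ⟨m, hm⟩ := exists_nat_one_div_lt hpos
      exact absurd (hp m) (not_lt.2 hm.le)
    · intro hp m
      rw [hp]
      positivity
  have hmono : Antitone (fun m : ℕ => {p : Om | Fw p < 1/((m:ℝ)+1)}) := by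
    intro m m' hmm'
    intro p hp
    simp only [Set.mem_setOf_eq] at hp ⊢
    have : 1/((m':ℝ)+1) ≤ 1/((m:ℝ)+1) := by
      apply one_div_le_one_div_of_le
      · positivity
      · have : (m:ℝ) ≤ m' := by exact_mod_cast hmm'
        linarith
    linarith
  have htend := MeasureTheory.tendsto_measure_iInter_atTop
    (μ := (volume : Measure Om)) (s := fun m : ℕ => {p : Om | Fw p < 1/((m:ℝ)+1)})
    (fun m => (hwm (measurableSet_Iio (a := 1/((m:ℝ)+1)))).nullMeasurableSet)
    hmono ⟨0, measure_ne_top _ _⟩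
  rw [hiInter] at htend
  apply ge_of_tendsto htend
  filter_upwards with m
  exact claim _ (by positivity)

end Level

end DJH


namespace DJH
open Filter Set Topology

lemma graphon_bound {X : UI → UI → ℝ} (hX : IsGraphon X) (p : Om) :
    |Function.uncurry X p| ≤ 1 := by
  have h : Function.uncurry X p ∈ Icc (0:ℝ) 1 := hX.2.2 p.1 p.2
  rw [abs_le]
  exact ⟨by linarith [h.1], h.2⟩

lemma graphon_mem {X : UI → UI → ℝ} (hX : IsGraphon X) (p : Om) :
    Function.uncurry X p ∈ Icc (0:ℝ) 1 := hX.2.2 p.1 p.2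

lemma vers_graphon {X : UI → UI → ℝ} (hX : IsGraphon X) (φ : MPB) :
    IsGraphon (vers X φ.toFun) := by
  refine ⟨?_, ?_, ?_⟩
  · rw [uncurry_vers]
    exact hX.1.comp (φ.m.prodMap φ.m)
  · intro x y
    exact hX.2.1 _ _
  · intro x y
    exact hX.2.2 _ _

lemma vers_integral_comp {X : UI → UI → ℝ} (φ : MPB) (h : ℝ → ℝ) :
    ∫ p, h (Function.uncurry (vers X φ.toFun) p) = ∫ p, h (Function.uncurry X p) :=
  MPB.integral_pmap φ (fun p => h (Function.uncurry X p))

lemma vers_level_measure {X : UI → UI → ℝ} (hX : Measurable (Function.uncurry X)) (φ : MPB)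
    (ε : ℝ) :
    (volume : Measure Om) {p | Function.uncurry (vers X φ.toFun) p < ε}
      = (volume : Measure Om) {p | Function.uncurry X p < ε} := by
  have he : {p : Om | Function.uncurry (vers X φ.toFun) p < ε}
      = φ.pmap ⁻¹' {p : Om | Function.uncurry X p < ε} := rfl
  rw [he]
  exact MPB.measure_pmap φ (hX measurableSet_Iio)

/-- decomposition of `INTf` using the regularized convex function. -/
lemma INTf_decomp (f : ℝ → ℝ) (hf : ConvexOn ℝ (Icc (0:ℝ) 1) f) {X : UI → UI → ℝ}
    (hX : IsGraphon X) :
    INTf f X = (∫ p : Om, ftil f (Function.uncurry X p))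
      + (f 0 - epA f) * ((volume : Measure Om) {p : Om | Function.uncurry X p = 0}).toReal
      + (f 1 - epB f) * ((volume : Measure Om) {p : Om | Function.uncurry X p = 1}).toReal := by
  have hXm : Measurable (Function.uncurry X) := hX.1
  have hA0m : MeasurableSet {p : Om | Function.uncurry X p = 0} :=
    hXm (measurableSet_singleton 0)
  have hA1m : MeasurableSet {p : Om | Function.uncurry X p = 1} :=
    hXm (measurableSet_singleton 1)
  have hptw : (fun p : Om => f (Function.uncurry X p))
      = fun p => ftil f (Function.uncurry X p)
        + Set.indicator {q : Om | Function.uncurry X q = 0} (fun _ => f 0 - epA f) p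
        + Set.indicator {q : Om | Function.uncurry X q = 1} (fun _ => f 1 - epB f) p := by
    funext p
    have hd := f_decomp hf (graphon_mem hX p)
    rw [Set.indicator_apply, Set.indicator_apply]
    simp only [Set.mem_setOf_eq]
    rw [hd]
  have hfti : Integrable (fun p : Om => ftil f (Function.uncurry X p)) volume :=
    comp_integrable (ftil_cont hf) hXm (graphon_mem hX)
  have hi0 : Integrable (Set.indicator {q : Om | Function.uncurry X q = 0}
      (fun _ => f 0 - epA f)) volume := (integrable_const _).indicator hA0m
  have hi1 : Integrable (Set.indicator {q : Om | Function.uncurry X q = 1}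
      (fun _ => f 1 - epB f)) volume := (integrable_const _).indicator hA1m
  have hXi : Integrable (fun p : Om => f (Function.uncurry X p)) volume := by
    rw [hptw]
    exact (hfti.add hi0).add hi1
  have step1 : INTf f X = ∫ p : Om, f (Function.uncurry X p) := by
    unfold INTf
    rw [MeasureTheory.integral_integral (f := fun x y => f (X x y)) hXi]
    rfl
  have hi01 : Integrable (fun p : Om => ftil f (Function.uncurry X p)
      + Set.indicator {q : Om | Function.uncurry X q = 0} (fun _ => f 0 - epA f) p) volume :=
    hfti.add hi0
  rw [step1, hptw, MeasureTheory.integral_add hi01 hi1,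
    MeasureTheory.integral_add hfti hi0,
    MeasureTheory.integral_indicator hA0m, MeasureTheory.integral_indicator hA1m,
    MeasureTheory.setIntegral_const, MeasureTheory.setIntegral_const]
  simp only [smul_eq_mul, measureReal_def]
  ring

end DJH


open DJH Filter Set Topology

/-- For every strictly convex (not necessarily continuous) `f : [0,1] → ℝ`, the
graphon parameter `INT_f` is cut distance identifying: `U ≺ W` implies
`INT_f(U) < INT_f(W)`. -/
theorem INTf_strictConvex_cutDistIdentifying (f : ℝ → ℝ)
    (hf : StrictConvexOn ℝ (Set.Icc (0:ℝ) 1) f)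
    (U W : UI → UI → ℝ) (hU : IsGraphon U) (hW : IsGraphon W)
    (hUW : structLT U W) :
    INTf f U < INTf f W := by
  by_contra hcon
  push_neg at hcon
  obtain ⟨hsub, hnsub⟩ := hUW
  have hconv : ConvexOn ℝ (Set.Icc (0:ℝ) 1) f := hf.convexOn
  -- U is in its own envelope, hence in ⟨W⟩
  have hUinU : U ∈ envelope U :=
    ⟨hU, fun _ => MPB.id', fun S T hS hT => tendsto_const_nhds⟩
  obtain ⟨-, π, hπ⟩ := hsub hUinU
  have hUm : Measurable (Function.uncurry U) := hU.1
  have hUmem : ∀ p : Om, Function.uncurry U p ∈ Set.Icc (0:ℝ) 1 := graphon_mem hU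
  have hVg : ∀ n, IsGraphon (vers W (π n).toFun) := fun n => vers_graphon hW (π n)
  have hVm : ∀ n, Measurable (Function.uncurry (vers W (π n).toFun)) := fun n => (hVg n).1
  have hVmem : ∀ n (p : Om), Function.uncurry (vers W (π n).toFun) p ∈ Set.Icc (0:ℝ) 1 :=
    fun n => graphon_mem (hVg n)
  -- rectangle convergence upgrades to all measurable sets
  have hsets : ∀ E : Set Om, MeasurableSet E →
      Tendsto (fun n => ∫ p in E, Function.uncurry (vers W (π n).toFun) p) atTop
        (nhds (∫ p in E, Function.uncurry U p)) := by
    intro E hE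
    apply tendsto_setIntegral_of_rect hVm (fun n => graphon_bound (hVg n)) hUm
      (graphon_bound hU) ?_ hE
    intro S T hS hT
    have h := hπ S T hS hT
    have e2 : ∫ x in S, ∫ y in T, U x y = ∫ p in S ×ˢ T, Function.uncurry U p :=
      iter_eq_set U hU.1 1 (graphon_bound hU) S T
    rw [e2] at h
    exact h.congr (fun n => iter_eq_set _ (hVm n) 1 (graphon_bound (hVg n)) S T)
  have hgcvx : ConvexOn ℝ (Set.Icc (0:ℝ) 1) (ftil f) := ftil_convex hconv
  have hgc : Continuous (ftil f) := ftil_cont hconv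
  have hIW : ∀ n, ∫ p : Om, ftil f (Function.uncurry (vers W (π n).toFun) p)
      = ∫ p : Om, ftil f (Function.uncurry W p) :=
    fun n => vers_integral_comp (π n) (ftil f)
  -- compatibility
  have hIUle : (∫ p : Om, ftil f (Function.uncurry U p))
      ≤ ∫ p : Om, ftil f (Function.uncurry W p) :=
    stepA hgcvx hgc hUm hUmem hVm hVmem hsets hIW
  -- level sets at 0
  have hlevel0 : (volume : Measure Om) {p : Om | Function.uncurry U p = 0}
      ≤ (volume : Measure Om) {p : Om | Function.uncurry W p = 0} :=
    level_le hUm hUmem hVm hVmem hsets hW.1 (graphon_mem hW)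
      (fun n ε => vers_level_measure hW.1 (π n) ε)
  -- level sets at 1
  have hlevel1 : (volume : Measure Om) {p : Om | Function.uncurry U p = 1}
      ≤ (volume : Measure Om) {p : Om | Function.uncurry W p = 1} := by
    have hGm' : Measurable (fun p : Om => 1 - Function.uncurry U p) :=
      measurable_const.sub hUm
    have hG' : ∀ p : Om, (1 - Function.uncurry U p) ∈ Set.Icc (0:ℝ) 1 :=
      fun p => ⟨by linarith [(hUmem p).2], by linarith [(hUmem p).1]⟩
    have hFm' : ∀ n, Measurable (fun p : Om => 1 - Function.uncurry (vers W (π n).toFun) p) :=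
      fun n => measurable_const.sub (hVm n)
    have hF' : ∀ n (p : Om), (1 - Function.uncurry (vers W (π n).toFun) p) ∈ Set.Icc (0:ℝ) 1 :=
      fun n p => ⟨by linarith [(hVmem n p).2], by linarith [(hVmem n p).1]⟩
    have hsets' : ∀ E : Set Om, MeasurableSet E →
        Tendsto (fun n => ∫ p in E, (1 - Function.uncurry (vers W (π n).toFun) p)) atTop
          (nhds (∫ p in E, (1 - Function.uncurry U p))) := by
      intro E hE
      have hFVi : ∀ n, Integrable (Function.uncurry (vers W (π n).toFun))
          (volume : Measure Om) :=
        fun n => integrable_of_bound (hVm n) 1 (graphon_bound (hVg n))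
      have hFUi : Integrable (Function.uncurry U) (volume : Measure Om) :=
        integrable_of_bound hUm 1 (graphon_bound hU)
      have e : ∀ (H : Om → ℝ), Integrable H (volume : Measure Om) →
          ∫ p in E, (1 - H p) = ((volume : Measure Om) E).toReal - ∫ p in E, H p := by
        intro H hH
        rw [MeasureTheory.integral_sub (integrable_const 1).integrableOn hH.integrableOn,
          MeasureTheory.setIntegral_const]
        simp [smul_eq_mul, measureReal_def]
      simp only [e _ (hFVi _), e _ hFUi]
      exact tendsto_const_nhds.sub (hsets E hE)
    have hw' : Measurable (fun p : Om => 1 - Function.uncurry W p) :=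
      measurable_const.sub hW.1
    have hwmem' : ∀ p : Om, (1 - Function.uncurry W p) ∈ Set.Icc (0:ℝ) 1 :=
      fun p => ⟨by linarith [(graphon_mem hW p).2], by linarith [(graphon_mem hW p).1]⟩
    have hdist' : ∀ n (ε : ℝ),
        (volume : Measure Om) {p : Om | 1 - Function.uncurry (vers W (π n).toFun) p < ε}
          = (volume : Measure Om) {p : Om | 1 - Function.uncurry W p < ε} := by
      intro n ε
      have he : {p : Om | 1 - Function.uncurry (vers W (π n).toFun) p < ε}
          = (π n).pmap ⁻¹' {p : Om | 1 - Function.uncurry W p < ε} := rfl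
      rw [he]
      exact MPB.measure_pmap (π n) (hw' measurableSet_Iio)
    have hres := level_le hGm' hG' hFm' hF' hsets' hw' hwmem' hdist'
    have e0 : {p : Om | 1 - Function.uncurry U p = 0} = {p : Om | Function.uncurry U p = 1} := by
      ext p; simp only [Set.mem_setOf_eq]; constructor <;> intro h <;> linarith
    have e1 : {p : Om | 1 - Function.uncurry W p = 0} = {p : Om | Function.uncurry W p = 1} := by
      ext p; simp only [Set.mem_setOf_eq]; constructor <;> intro h <;> linarith
    rwa [e0, e1] at hres
  -- decompositions
  have hdU := INTf_decomp f hconv hU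
  have hdW := INTf_decomp f hconv hW
  have hα : 0 ≤ f 0 - epA f := by linarith [epA_le hconv]
  have hβ : 0 ≤ f 1 - epB f := by linarith [epB_le hconv]
  have hm0 : ((volume : Measure Om) {p : Om | Function.uncurry U p = 0}).toReal
      ≤ ((volume : Measure Om) {p : Om | Function.uncurry W p = 0}).toReal :=
    ENNReal.toReal_mono (measure_ne_top _ _) hlevel0
  have hm1 : ((volume : Measure Om) {p : Om | Function.uncurry U p = 1}).toReal
      ≤ ((volume : Measure Om) {p : Om | Function.uncurry W p = 1}).toReal :=
    ENNReal.toReal_mono (measure_ne_top _ _) hlevel1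
  -- from the assumed inequality, the regularized integrals agree
  have hIUeq : (∫ p : Om, ftil f (Function.uncurry U p))
      = ∫ p : Om, ftil f (Function.uncurry W p) := by
    rw [hdU, hdW] at hcon
    have p0 := mul_le_mul_of_nonneg_left hm0 hα
    have p1 := mul_le_mul_of_nonneg_left hm1 hβ
    linarith [hcon, p0, p1, hIUle]
  -- L¹ convergence of the versions to U
  have hmid : ∀ a ε : ℝ, 0 ≤ a → 0 < ε → a + ε ≤ 1 →
      0 < ftil f a + ftil f (a+ε) - 2*ftil f (a+ε/2) :=
    fun a ε ha hε hae => ftil_midgap hf ha hε hae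
  have hL1 : ∀ η : ℝ, 0 < η → ∀ᶠ n in atTop,
      ∫ p : Om, |Function.uncurry (vers W (π n).toFun) p - Function.uncurry U p| < η :=
    fun η hη => stepB hgcvx hgc hmid hUm hUmem hVm hVmem hsets hIW hIUeq hη
  have hch : ∀ m : ℕ, ∃ nm : ℕ,
      ∫ p : Om, |Function.uncurry (vers W (π nm).toFun) p - Function.uncurry U p|
        < 1/((m:ℝ)+1) :=
    fun m => (hL1 _ (by positivity)).exists
  choose nm hnm using hch
  -- now show ⟨W⟩ ⊆ ⟨U⟩, contradicting structLT
  apply hnsub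
  intro X hX
  obtain ⟨hXg, σ, hσ⟩ := hX
  set τ : ℕ → MPB := fun m => MPB.comp (π (nm m)).inv (σ m) with hτdef
  refine ⟨hXg, τ, ?_⟩
  intro S T hS hT
  have hτg : ∀ m, IsGraphon (vers U (τ m).toFun) := fun m => vers_graphon hU (τ m)
  have hσg : ∀ m, IsGraphon (vers W (σ m).toFun) := fun m => vers_graphon hW (σ m)
  have eX : ∫ x in S, ∫ y in T, X x y = ∫ p in S ×ˢ T, Function.uncurry X p :=
    iter_eq_set X hXg.1 1 (graphon_bound hXg) S T
  have eσ : ∀ m, ∫ x in S, ∫ y in T, vers W (σ m).toFun x y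
      = ∫ p in S ×ˢ T, Function.uncurry (vers W (σ m).toFun) p :=
    fun m => iter_eq_set _ (hσg m).1 1 (graphon_bound (hσg m)) S T
  have eτ : ∀ m, ∫ x in S, ∫ y in T, vers U (τ m).toFun x y
      = ∫ p in S ×ˢ T, Function.uncurry (vers U (τ m).toFun) p :=
    fun m => iter_eq_set _ (hτg m).1 1 (graphon_bound (hτg m)) S T
  -- the key quantitative bound
  have hbound : ∀ m, |(∫ p in S ×ˢ T, Function.uncurry (vers U (τ m).toFun) p)
      - ∫ p in S ×ˢ T, Function.uncurry (vers W (σ m).toFun) p| ≤ 1/((m:ℝ)+1) := by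
    intro m
    have hIτ : Integrable (Function.uncurry (vers U (τ m).toFun)) (volume : Measure Om) :=
      integrable_of_bound (hτg m).1 1 (graphon_bound (hτg m))
    have hIσ : Integrable (Function.uncurry (vers W (σ m).toFun)) (volume : Measure Om) :=
      integrable_of_bound (hσg m).1 1 (graphon_bound (hσg m))
    have hkey : ∀ p : Om, Function.uncurry (vers W (σ m).toFun) p
        = Function.uncurry (vers W (π (nm m)).toFun) ((τ m).pmap p) := by
      intro p
      show W ((σ m).toFun p.1) ((σ m).toFun p.2)
        = W ((π (nm m)).toFun ((π (nm m)).inv.toFun ((σ m).toFun p.1)))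
            ((π (nm m)).toFun ((π (nm m)).inv.toFun ((σ m).toFun p.2)))
      rw [MPB.inv_right, MPB.inv_right]
    have e1 : (∫ p in S ×ˢ T, Function.uncurry (vers U (τ m).toFun) p)
        - ∫ p in S ×ˢ T, Function.uncurry (vers W (σ m).toFun) p
        = ∫ p in S ×ˢ T, (Function.uncurry (vers U (τ m).toFun) p
            - Function.uncurry (vers W (σ m).toFun) p) :=
      (MeasureTheory.integral_sub hIτ.integrableOn hIσ.integrableOn).symm
    rw [e1]
    have habs : |∫ p in S ×ˢ T, (Function.uncurry (vers U (τ m).toFun) p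
        - Function.uncurry (vers W (σ m).toFun) p)|
        ≤ ∫ p in S ×ˢ T, |Function.uncurry (vers U (τ m).toFun) p
            - Function.uncurry (vers W (σ m).toFun) p| := by
      simpa [Real.norm_eq_abs] using MeasureTheory.norm_integral_le_integral_norm
        (μ := (volume : Measure Om).restrict (S ×ˢ T))
        (f := fun p : Om => Function.uncurry (vers U (τ m).toFun) p
          - Function.uncurry (vers W (σ m).toFun) p)
    have hsetle : ∫ p in S ×ˢ T, |Function.uncurry (vers U (τ m).toFun) p
        - Function.uncurry (vers W (σ m).toFun) p|
        ≤ ∫ p : Om, |Function.uncurry (vers U (τ m).toFun) p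
            - Function.uncurry (vers W (σ m).toFun) p| := by
      apply MeasureTheory.setIntegral_le_integral ((hIτ.sub hIσ).abs)
      exact Filter.Eventually.of_forall (fun p => abs_nonneg _)
    have ecomp : (fun p : Om => |Function.uncurry (vers U (τ m).toFun) p
        - Function.uncurry (vers W (σ m).toFun) p|)
        = fun p : Om => (fun q : Om => |Function.uncurry U q
            - Function.uncurry (vers W (π (nm m)).toFun) q|) ((τ m).pmap p) := by
      funext p
      rw [hkey p]
      rfl
    have efin : ∫ p : Om, |Function.uncurry (vers U (τ m).toFun) p
        - Function.uncurry (vers W (σ m).toFun) p|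
        = ∫ p : Om, |Function.uncurry U p
            - Function.uncurry (vers W (π (nm m)).toFun) p| := by
      rw [ecomp]
      exact MPB.integral_pmap (τ m) (fun q => |Function.uncurry U q
        - Function.uncurry (vers W (π (nm m)).toFun) q|)
    have ecomm : ∫ p : Om, |Function.uncurry U p
        - Function.uncurry (vers W (π (nm m)).toFun) p|
        = ∫ p : Om, |Function.uncurry (vers W (π (nm m)).toFun) p - Function.uncurry U p| := by
      congr 1
      funext p
      rw [abs_sub_comm]
    calc |∫ p in S ×ˢ T, (Function.uncurry (vers U (τ m).toFun) p
        - Function.uncurry (vers W (σ m).toFun) p)|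
        ≤ ∫ p in S ×ˢ T, |Function.uncurry (vers U (τ m).toFun) p
            - Function.uncurry (vers W (σ m).toFun) p| := habs
      _ ≤ ∫ p : Om, |Function.uncurry (vers U (τ m).toFun) p
            - Function.uncurry (vers W (σ m).toFun) p| := hsetle
      _ = ∫ p : Om, |Function.uncurry (vers W (π (nm m)).toFun) p - Function.uncurry U p| := by
          rw [efin, ecomm]
      _ ≤ 1/((m:ℝ)+1) := (hnm m).le
  -- assemble the limit
  have hlim : Tendsto (fun m => ∫ p in S ×ˢ T, Function.uncurry (vers W (σ m).toFun) p) atTop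
      (nhds (∫ p in S ×ˢ T, Function.uncurry X p)) := by
    have h := hσ S T hS hT
    rw [eX] at h
    exact h.congr (fun m => eσ m)
  have hdiff0 : Tendsto (fun m => (∫ p in S ×ˢ T, Function.uncurry (vers U (τ m).toFun) p)
      - ∫ p in S ×ˢ T, Function.uncurry (vers W (σ m).toFun) p) atTop (nhds 0) := by
    apply squeeze_zero_norm (fun m => ?_) tendsto_one_div_add_atTop_nhds_zero_nat
    simpa [Real.norm_eq_abs] using hbound m
  have hfinal : Tendsto (fun m => ∫ p in S ×ˢ T, Function.uncurry (vers U (τ m).toFun) p) atTop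
      (nhds (∫ p in S ×ˢ T, Function.uncurry X p)) := by
    have h2 := hdiff0.add hlim
    rw [zero_add] at h2
    refine h2.congr fun m => ?_
    ring
  rw [eX]
  exact hfinal.congr (fun m => (eτ m).symm)


end
end
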